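/- arXiv:1206.0410 — 9 statements merged into one kernel-verified Lean document; each statement's English description precedes it below -/
import Mathlib

section
/- Let H be a Hopf algebra with bijective antipode and (K, r) a braided central Hopf subalgebra. For every left K-comodule M with coaction m ↦ m₋₁ ⊗ m₀, the map h ⊣ m := r(h, m₋₁)m₀ defines a left H-module structure on M (where K-comodules are viewed as H-comodules via the inclusion K ⊆ H), and together with the H-comodule structure this makes M a left-left Yetter–Drinfeld module over H, i.e. (h₁ ⊣ m)₋₁ h₂ ⊗ (h₁ ⊣ m)₀ = h₁ m₋₁ ⊗ (h₂ ⊣ m₀) for all h ∈ H, m ∈ M. -/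
open TensorProduct

/-- Auxiliary bundled linear map: from `u ∈ (K ⊗ K) ⊗ M` produce the linear map
`H →ₗ H ⊗ M` sending (on pure tensors `u = (k ⊗ k') ⊗ n`) `h ↦ r h k • (j k' ⊗ n)`. -/
noncomputable def Gaux {𝕜 H K M : Type*} [CommSemiring 𝕜]
    [AddCommMonoid H] [Module 𝕜 H] [AddCommMonoid K] [Module 𝕜 K]
    [AddCommMonoid M] [Module 𝕜 M]
    (r : H →ₗ[𝕜] K →ₗ[𝕜] 𝕜) (j : K →ₗ[𝕜] H) :
    (K ⊗[𝕜] K) ⊗[𝕜] M →ₗ[𝕜] H →ₗ[𝕜] H ⊗[𝕜] M :=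
  (TensorProduct.curry ((TensorProduct.lid 𝕜 (H ⊗[𝕜] M)).toLinearMap ∘ₗ
      TensorProduct.map (TensorProduct.lift r) LinearMap.id ∘ₗ
      (TensorProduct.assoc 𝕜 H K (H ⊗[𝕜] M)).symm.toLinearMap)).flip ∘ₗ
    TensorProduct.map LinearMap.id (TensorProduct.map j LinearMap.id) ∘ₗ
    (TensorProduct.assoc 𝕜 K K M).toLinearMap

lemma Gaux_tmul {𝕜 H K M : Type*} [CommSemiring 𝕜]
    [AddCommMonoid H] [Module 𝕜 H] [AddCommMonoid K] [Module 𝕜 K]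
    [AddCommMonoid M] [Module 𝕜 M]
    (r : H →ₗ[𝕜] K →ₗ[𝕜] 𝕜) (j : K →ₗ[𝕜] H) (k k' : K) (n : M) (h : H) :
    Gaux r j ((k ⊗ₜ[𝕜] k') ⊗ₜ[𝕜] n) h = r h k • (j k' ⊗ₜ[𝕜] n) := by
  simp [Gaux]

set_option maxHeartbeats 2000000 in
/-- For a braided central Hopf subalgebra (K,r) of H (with bijective
antipode), any left K-comodule M becomes a left H-module via h ⊣ m := r(h, m₋₁)m₀,
and with the induced H-comodule structure it is a Yetter-Drinfeld module. -/
theorem braided_central_gives_yetter_drinfeld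
    {𝕜 H K : Type*} [Field 𝕜] [Semiring H] [HopfAlgebra 𝕜 H]
    [Semiring K] [HopfAlgebra 𝕜 K]
    (hS : Function.Bijective (HopfAlgebra.antipode (R := 𝕜) (A := H)))
    (ι : K →ₐc[𝕜] H) (hι : Function.Injective ι)
    (r : H →ₗ[𝕜] K →ₗ[𝕜] 𝕜)
    -- (2.1): r(hh', k) = r(h', k₁) r(h, k₂)
    (h21 : ∀ (h h' : H) (x : K), r (h * h') x
      = LinearMap.mul' 𝕜 𝕜 (TensorProduct.map (r h') (r h) (Coalgebra.comul (R := 𝕜) x)))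
    -- (2.2): r(h, kk') = r(h₁, k) r(h₂, k')
    (h22 : ∀ (h : H) (x y : K), r h (x * y)
      = LinearMap.mul' 𝕜 𝕜 (TensorProduct.map (r.flip x) (r.flip y) (Coalgebra.comul (R := 𝕜) h)))
    -- (2.3): r(h,1) = ε(h), r(1,k) = ε(k)
    (h23a : ∀ h : H, r h 1 = Coalgebra.counit (R := 𝕜) h)
    (h23b : ∀ x : K, r 1 x = Coalgebra.counit (R := 𝕜) x)
    -- (2.4): r(h₁, k₁) k₂ h₂ = h₁ k₁ r(h₂, k₂)
    (h24 : ∀ (h : H) (x : K),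
      (TensorProduct.lid 𝕜 H) (TensorProduct.map (TensorProduct.lift r)
          ((LinearMap.mul' 𝕜 H) ∘ₗ (TensorProduct.map ι.toLinearMap LinearMap.id)
            ∘ₗ (TensorProduct.comm 𝕜 H K).toLinearMap)
          ((TensorProduct.tensorTensorTensorComm 𝕜 H H K K)
            (Coalgebra.comul (R := 𝕜) h ⊗ₜ[𝕜] Coalgebra.comul (R := 𝕜) x)))
        = (TensorProduct.rid 𝕜 H) (TensorProduct.map
            ((LinearMap.mul' 𝕜 H) ∘ₗ (TensorProduct.map LinearMap.id ι.toLinearMap))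
            (TensorProduct.lift r)
            ((TensorProduct.tensorTensorTensorComm 𝕜 H H K K)
              (Coalgebra.comul (R := 𝕜) h ⊗ₜ[𝕜] Coalgebra.comul (R := 𝕜) x))))
    -- (2.5): r(k, k') = ε(k)ε(k')
    (h25 : ∀ x y : K, r (ι x) y = Coalgebra.counit (R := 𝕜) x * Coalgebra.counit (R := 𝕜) y)
    -- M is a left K-comodule
    {M : Type*} [AddCommGroup M] [Module 𝕜 M] (ρ : M →ₗ[𝕜] K ⊗[𝕜] M)
    (hcoassoc : ∀ m : M,
      (TensorProduct.assoc 𝕜 K K M)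
          ((TensorProduct.map (Coalgebra.comul (R := 𝕜)) LinearMap.id) (ρ m))
        = (TensorProduct.map LinearMap.id ρ) (ρ m))
    (hcounit : ∀ m : M,
      (TensorProduct.lid 𝕜 M)
          ((TensorProduct.map (Coalgebra.counit (R := 𝕜)) LinearMap.id) (ρ m)) = m)
    -- the action h ⊣ m = r(h, m₋₁) m₀
    (act : H →ₗ[𝕜] M →ₗ[𝕜] M)
    (hact : ∀ (h : H) (m : M),
      act h m = (TensorProduct.lid 𝕜 M) (TensorProduct.map (r h) LinearMap.id (ρ m))) :
    -- ⊣ is a left H-module structure on M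
    (∀ m : M, act 1 m = m)
    ∧ (∀ (h h' : H) (m : M), act (h * h') m = act h (act h' m))
    -- Yetter-Drinfeld condition: (h₁ ⊣ m)₋₁ h₂ ⊗ (h₁ ⊣ m)₀ = h₁ m₋₁ ⊗ (h₂ ⊣ m₀),
    -- where the H-coaction on M is (ι ⊗ id) ∘ ρ
    ∧ (∀ (h : H) (m : M),
      (TensorProduct.map (LinearMap.mul' 𝕜 H) LinearMap.id)
          ((TensorProduct.assoc 𝕜 H H M).symm
            ((TensorProduct.map LinearMap.id (TensorProduct.comm 𝕜 M H).toLinearMap)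
              ((TensorProduct.assoc 𝕜 H M H)
                ((TensorProduct.map
                    (((TensorProduct.map ι.toLinearMap LinearMap.id) ∘ₗ ρ) ∘ₗ act.flip m)
                    LinearMap.id)
                  (Coalgebra.comul (R := 𝕜) h)))))
        = (TensorProduct.map (LinearMap.mul' 𝕜 H) (TensorProduct.lift act))
            ((TensorProduct.tensorTensorTensorComm 𝕜 H H H M)
              ((Coalgebra.comul (R := 𝕜) h) ⊗ₜ[𝕜]
                ((TensorProduct.map ι.toLinearMap LinearMap.id) (ρ m))))) := by
  have rho_lid : ∀ (f : K →ₗ[𝕜] 𝕜) (s : K ⊗[𝕜] M),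
      ρ ((TensorProduct.lid 𝕜 M) (TensorProduct.map f LinearMap.id s))
        = (TensorProduct.lid 𝕜 (K ⊗[𝕜] M)) (TensorProduct.map f ρ s) := by
    intro f s
    induction s using TensorProduct.induction_on with
    | zero => simp
    | tmul k n => simp
    | add x y hx hy => simp [map_add, hx, hy]
  refine ⟨?_, ?_, ?_⟩
  · intro m
    rw [hact]
    have : (r 1) = Coalgebra.counit (R := 𝕜) (A := K) := LinearMap.ext h23b
    rw [this]
    exact hcounit m
  · intro h h' m
    have hsplit : ∀ s : K ⊗[𝕜] M,
        TensorProduct.map (r (h * h')) LinearMap.id s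
          = TensorProduct.map ((LinearMap.mul' 𝕜 𝕜) ∘ₗ (TensorProduct.map (r h') (r h)))
              LinearMap.id
              (TensorProduct.map (Coalgebra.comul (R := 𝕜)) LinearMap.id s) := by
      intro s
      induction s using TensorProduct.induction_on with
      | zero => simp
      | tmul k n => simp [h21]
      | add x y hx hy => simp [map_add, hx, hy]
    have claim2 : ((TensorProduct.lid 𝕜 M).toLinearMap ∘ₗ
          TensorProduct.map ((LinearMap.mul' 𝕜 𝕜) ∘ₗ TensorProduct.map (r h') (r h))
            LinearMap.id)
        = (TensorProduct.lid 𝕜 M).toLinearMap ∘ₗ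
            TensorProduct.map (r h) LinearMap.id ∘ₗ
            (TensorProduct.lid 𝕜 (K ⊗[𝕜] M)).toLinearMap ∘ₗ
            TensorProduct.map (r h') LinearMap.id ∘ₗ
            (TensorProduct.assoc 𝕜 K K M).toLinearMap := by
      ext k k' n
      simp [smul_smul]
    have hmapρ : TensorProduct.map (r h') ρ (ρ m)
        = TensorProduct.map (r h') LinearMap.id
            ((TensorProduct.assoc 𝕜 K K M)
              (TensorProduct.map (Coalgebra.comul (R := 𝕜)) LinearMap.id (ρ m))) := by
      rw [hcoassoc m]
      have : TensorProduct.map (r h') ρ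
          = (TensorProduct.map (r h') (LinearMap.id (M := K ⊗[𝕜] M))) ∘ₗ
            (TensorProduct.map LinearMap.id ρ) := by
        rw [← TensorProduct.map_comp]; simp
      rw [this]; rfl
    rw [hact, hact h (act h' m), hact h' m, rho_lid, hsplit, hmapρ]
    have := LinearMap.congr_fun claim2
      (TensorProduct.map (Coalgebra.comul (R := 𝕜)) LinearMap.id (ρ m))
    simpa using this
  · intro h m
    have hmapρ' : ∀ (f : K →ₗ[𝕜] 𝕜), TensorProduct.map f ρ (ρ m)
        = TensorProduct.map f LinearMap.id
            ((TensorProduct.assoc 𝕜 K K M)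
              (TensorProduct.map (Coalgebra.comul (R := 𝕜)) LinearMap.id (ρ m))) := by
      intro f
      rw [hcoassoc m]
      have : TensorProduct.map f ρ
          = (TensorProduct.map f (LinearMap.id (M := K ⊗[𝕜] M))) ∘ₗ
            (TensorProduct.map LinearMap.id ρ) := by
        rw [← TensorProduct.map_comp]; simp
      rw [this]; rfl
    -- key1 : the composite coaction-after-action map equals Gaux applied to u
    have key1 : ((TensorProduct.map ι.toLinearMap LinearMap.id) ∘ₗ ρ) ∘ₗ act.flip m
        = Gaux r ι.toLinearMap
            (TensorProduct.map (Coalgebra.comul (R := 𝕜)) LinearMap.id (ρ m)) := by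
      apply LinearMap.ext; intro a
      simp only [LinearMap.comp_apply, LinearMap.flip_apply]
      rw [hact, rho_lid, hmapρ' (r a)]
      have claim : ∀ v : (K ⊗[𝕜] K) ⊗[𝕜] M,
          TensorProduct.map ι.toLinearMap LinearMap.id
            ((TensorProduct.lid 𝕜 (K ⊗[𝕜] M))
              (TensorProduct.map (r a) LinearMap.id ((TensorProduct.assoc 𝕜 K K M) v)))
          = Gaux r ι.toLinearMap v a := by
        intro v
        induction v using TensorProduct.induction_on with
        | zero => simp
        | tmul x n =>
          induction x using TensorProduct.induction_on with
          | zero => simp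
          | tmul k k' => simp [Gaux_tmul]
          | add x y hx hy =>
            simp only [add_tmul, map_add, LinearMap.add_apply, hx, hy]
        | add x y hx hy => simp only [map_add, LinearMap.add_apply, hx, hy]
      exact claim _
    rw [key1]
    -- structural claim (a2)
    have claimA : ∀ (c : H ⊗[𝕜] H) (v : (K ⊗[𝕜] K) ⊗[𝕜] M),
        (TensorProduct.map (LinearMap.mul' 𝕜 H) LinearMap.id)
          ((TensorProduct.assoc 𝕜 H H M).symm
            ((TensorProduct.map LinearMap.id (TensorProduct.comm 𝕜 M H).toLinearMap)
              ((TensorProduct.assoc 𝕜 H M H)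
                ((TensorProduct.map (Gaux r ι.toLinearMap v) LinearMap.id) c))))
        = (TensorProduct.map
            ((TensorProduct.lid 𝕜 H).toLinearMap ∘ₗ
              TensorProduct.map (TensorProduct.lift r)
                ((LinearMap.mul' 𝕜 H) ∘ₗ (TensorProduct.map ι.toLinearMap LinearMap.id)
                  ∘ₗ (TensorProduct.comm 𝕜 H K).toLinearMap))
            LinearMap.id)
          ((TensorProduct.map (TensorProduct.tensorTensorTensorComm 𝕜 H H K K).toLinearMap
              LinearMap.id)
            ((TensorProduct.assoc 𝕜 (H ⊗[𝕜] H) (K ⊗[𝕜] K) M).symm (c ⊗ₜ[𝕜] v))) := by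
      intro c v
      induction c using TensorProduct.induction_on with
      | zero => simp
      | tmul a b =>
        induction v using TensorProduct.induction_on with
        | zero => simp
        | tmul x n =>
          induction x using TensorProduct.induction_on with
          | zero => simp
          | tmul k k' =>
            simp [Gaux_tmul, smul_tmul', LinearMap.mul'_apply, tmul_smul]
          | add x y hx hy =>
            simp only [add_tmul, map_add, LinearMap.add_apply, tmul_add,
              TensorProduct.map_add_left, hx, hy]
        | add x y hx hy =>
          simp only [map_add, LinearMap.add_apply, tmul_add,
            TensorProduct.map_add_left, hx, hy]
      | add x y hx hy => simp only [map_add, tmul_add, add_tmul, hx, hy]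
    rw [claimA]
    -- apply (2.4)
    have claimMid : ∀ s : K ⊗[𝕜] M,
        (TensorProduct.map
            ((TensorProduct.lid 𝕜 H).toLinearMap ∘ₗ
              TensorProduct.map (TensorProduct.lift r)
                ((LinearMap.mul' 𝕜 H) ∘ₗ (TensorProduct.map ι.toLinearMap LinearMap.id)
                  ∘ₗ (TensorProduct.comm 𝕜 H K).toLinearMap))
            LinearMap.id)
          ((TensorProduct.map (TensorProduct.tensorTensorTensorComm 𝕜 H H K K).toLinearMap
              LinearMap.id)
            ((TensorProduct.assoc 𝕜 (H ⊗[𝕜] H) (K ⊗[𝕜] K) M).symm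
              ((Coalgebra.comul (R := 𝕜) h) ⊗ₜ[𝕜]
                (TensorProduct.map (Coalgebra.comul (R := 𝕜)) LinearMap.id s))))
        = (TensorProduct.map
            ((TensorProduct.rid 𝕜 H).toLinearMap ∘ₗ
              TensorProduct.map
                ((LinearMap.mul' 𝕜 H) ∘ₗ (TensorProduct.map LinearMap.id ι.toLinearMap))
                (TensorProduct.lift r))
            LinearMap.id)
          ((TensorProduct.map (TensorProduct.tensorTensorTensorComm 𝕜 H H K K).toLinearMap
              LinearMap.id)
            ((TensorProduct.assoc 𝕜 (H ⊗[𝕜] H) (K ⊗[𝕜] K) M).symm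
              ((Coalgebra.comul (R := 𝕜) h) ⊗ₜ[𝕜]
                (TensorProduct.map (Coalgebra.comul (R := 𝕜)) LinearMap.id s))) ) := by
      intro s
      induction s using TensorProduct.induction_on with
      | zero => simp
      | tmul k n =>
        simp only [TensorProduct.map_tmul, TensorProduct.assoc_symm_tmul,
          LinearMap.comp_apply, LinearMap.id_coe, id_eq, LinearEquiv.coe_coe]
        rw [h24 h k]
      | add x y hx hy => simp only [tmul_add, map_add, hx, hy]
    rw [claimMid (ρ m)]
    -- now the right-hand side
    have hlift : TensorProduct.lift act
        = ((TensorProduct.lid 𝕜 M).toLinearMap ∘ₗ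
            TensorProduct.map (TensorProduct.lift r) LinearMap.id ∘ₗ
            (TensorProduct.assoc 𝕜 H K M).symm.toLinearMap) ∘ₗ
          TensorProduct.map LinearMap.id ρ := by
      apply TensorProduct.ext'; intro a m'
      simp only [TensorProduct.lift.tmul, LinearMap.comp_apply, TensorProduct.map_tmul,
        LinearMap.id_coe, id_eq, LinearEquiv.coe_coe]
      rw [hact]
      generalize ρ m' = s
      induction s using TensorProduct.induction_on with
      | zero => simp
      | tmul k n => simp
      | add x y hx hy => simp only [map_add, tmul_add, hx, hy]
    have hsplitR : TensorProduct.map (LinearMap.mul' 𝕜 H)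
          (((TensorProduct.lid 𝕜 M).toLinearMap ∘ₗ
            TensorProduct.map (TensorProduct.lift r) LinearMap.id ∘ₗ
            (TensorProduct.assoc 𝕜 H K M).symm.toLinearMap) ∘ₗ
          TensorProduct.map LinearMap.id ρ)
        = TensorProduct.map (LinearMap.mul' 𝕜 H)
            ((TensorProduct.lid 𝕜 M).toLinearMap ∘ₗ
              TensorProduct.map (TensorProduct.lift r) LinearMap.id ∘ₗ
              (TensorProduct.assoc 𝕜 H K M).symm.toLinearMap) ∘ₗ
          TensorProduct.map LinearMap.id (TensorProduct.map LinearMap.id ρ) := by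
      rw [← TensorProduct.map_comp, LinearMap.comp_id]
    rw [hlift, hsplitR]
    simp only [LinearMap.comp_apply]
    -- (b1): push ρ inside
    have claimB1 : ∀ (c : H ⊗[𝕜] H) (s : K ⊗[𝕜] M),
        TensorProduct.map LinearMap.id (TensorProduct.map LinearMap.id ρ)
          ((TensorProduct.tensorTensorTensorComm 𝕜 H H H M)
            (c ⊗ₜ[𝕜] (TensorProduct.map ι.toLinearMap LinearMap.id s)))
        = (TensorProduct.tensorTensorTensorComm 𝕜 H H H (K ⊗[𝕜] M))
            (c ⊗ₜ[𝕜] (TensorProduct.map ι.toLinearMap LinearMap.id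
              (TensorProduct.map LinearMap.id ρ s))) := by
      intro c s
      induction c using TensorProduct.induction_on with
      | zero => simp
      | tmul a b =>
        induction s using TensorProduct.induction_on with
        | zero => simp
        | tmul k n => simp
        | add x y hx hy => simp only [map_add, tmul_add, hx, hy]
      | add x y hx hy => simp only [map_add, add_tmul, tmul_add, hx, hy]
    rw [claimB1, ← hcoassoc m]
    -- (b2): structural identity for the right-hand side
    have claimB2 : ∀ (c : H ⊗[𝕜] H) (v : (K ⊗[𝕜] K) ⊗[𝕜] M),
        TensorProduct.map (LinearMap.mul' 𝕜 H)
            ((TensorProduct.lid 𝕜 M).toLinearMap ∘ₗ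
              TensorProduct.map (TensorProduct.lift r) LinearMap.id ∘ₗ
              (TensorProduct.assoc 𝕜 H K M).symm.toLinearMap)
          ((TensorProduct.tensorTensorTensorComm 𝕜 H H H (K ⊗[𝕜] M))
            (c ⊗ₜ[𝕜] (TensorProduct.map ι.toLinearMap LinearMap.id
              ((TensorProduct.assoc 𝕜 K K M) v))))
        = (TensorProduct.map
            ((TensorProduct.rid 𝕜 H).toLinearMap ∘ₗ
              TensorProduct.map
                ((LinearMap.mul' 𝕜 H) ∘ₗ (TensorProduct.map LinearMap.id ι.toLinearMap))
                (TensorProduct.lift r))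
            LinearMap.id)
          ((TensorProduct.map (TensorProduct.tensorTensorTensorComm 𝕜 H H K K).toLinearMap
              LinearMap.id)
            ((TensorProduct.assoc 𝕜 (H ⊗[𝕜] H) (K ⊗[𝕜] K) M).symm (c ⊗ₜ[𝕜] v))) := by
      intro c v
      induction c using TensorProduct.induction_on with
      | zero => simp
      | tmul a b =>
        induction v using TensorProduct.induction_on with
        | zero => simp
        | tmul x n =>
          induction x using TensorProduct.induction_on with
          | zero => simp
          | tmul k k' =>
            simp [smul_tmul', LinearMap.mul'_apply, tmul_smul]
          | add x y hx hy =>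
            simp only [add_tmul, map_add, tmul_add, LinearMap.add_apply, hx, hy]
        | add x y hx hy => simp only [map_add, tmul_add, hx, hy]
      | add x y hx hy => simp only [map_add, add_tmul, tmul_add, hx, hy]
    exact (claimB2 (Coalgebra.comul (R := 𝕜) h)
      (TensorProduct.map (Coalgebra.comul (R := 𝕜)) LinearMap.id (ρ m))).symm
end

section
/- Let H be a Hopf algebra and (K, r) a braided central Hopf subalgebra. Then r descends to a well-defined bilinear map (H / K⁺H) ⊗ K → k, h̄ ⊗ k ↦ r(h, k), where K⁺ = ker(ε|_K) is the augmentation ideal of K. -/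
open TensorProduct

/-- For a braided central Hopf subalgebra (K, r) of H, the pairing r
descends to a well-defined bilinear map (H / K⁺H) ⊗ K → k. -/
theorem braided_central_r_descends
    {𝕜 H K : Type*} [Field 𝕜] [Ring H] [HopfAlgebra 𝕜 H]
    [Ring K] [HopfAlgebra 𝕜 K]
    (ι : K →ₐc[𝕜] H) (hι : Function.Injective ι)
    (r : H →ₗ[𝕜] K →ₗ[𝕜] 𝕜)
    -- (2.1): r(hh', k) = r(h', k₁) r(h, k₂)
    (h21 : ∀ (h h' : H) (x : K), r (h * h') x
      = LinearMap.mul' 𝕜 𝕜 (TensorProduct.map (r h') (r h) (Coalgebra.comul (R := 𝕜) x)))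
    -- (2.2): r(h, kk') = r(h₁, k) r(h₂, k')
    (h22 : ∀ (h : H) (x y : K), r h (x * y)
      = LinearMap.mul' 𝕜 𝕜 (TensorProduct.map (r.flip x) (r.flip y) (Coalgebra.comul (R := 𝕜) h)))
    -- (2.3): r(h,1) = ε(h), r(1,k) = ε(k)
    (h23a : ∀ h : H, r h 1 = Coalgebra.counit (R := 𝕜) h)
    (h23b : ∀ x : K, r 1 x = Coalgebra.counit (R := 𝕜) x)
    -- (2.4): r(h₁, k₁) k₂ h₂ = h₁ k₁ r(h₂, k₂)
    (h24 : ∀ (h : H) (x : K),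
      (TensorProduct.lid 𝕜 H) (TensorProduct.map (TensorProduct.lift r)
          ((LinearMap.mul' 𝕜 H) ∘ₗ (TensorProduct.map ι.toLinearMap LinearMap.id)
            ∘ₗ (TensorProduct.comm 𝕜 H K).toLinearMap)
          ((TensorProduct.tensorTensorTensorComm 𝕜 H H K K)
            (Coalgebra.comul (R := 𝕜) h ⊗ₜ[𝕜] Coalgebra.comul (R := 𝕜) x)))
        = (TensorProduct.rid 𝕜 H) (TensorProduct.map
            ((LinearMap.mul' 𝕜 H) ∘ₗ (TensorProduct.map LinearMap.id ι.toLinearMap))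
            (TensorProduct.lift r)
            ((TensorProduct.tensorTensorTensorComm 𝕜 H H K K)
              (Coalgebra.comul (R := 𝕜) h ⊗ₜ[𝕜] Coalgebra.comul (R := 𝕜) x))))
    -- (2.5): r(k, k') = ε(k)ε(k')
    (h25 : ∀ x y : K, r (ι x) y = Coalgebra.counit (R := 𝕜) x * Coalgebra.counit (R := 𝕜) y)
    : ∃ rbar : (H ⧸ (Submodule.span 𝕜
        {y : H | ∃ x : K, ∃ h : H, Coalgebra.counit (R := 𝕜) x = 0 ∧ y = ι x * h}))
          →ₗ[𝕜] K →ₗ[𝕜] 𝕜,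
      ∀ (h : H) (x : K), rbar (Submodule.Quotient.mk h) x = r h x := by
  set S := Submodule.span 𝕜
      {y : H | ∃ x : K, ∃ h : H, Coalgebra.counit (R := 𝕜) x = 0 ∧ y = ι x * h} with hS
  have hle : S ≤ LinearMap.ker r := by
    rw [hS, Submodule.span_le]
    rintro y ⟨x, h, hx, rfl⟩
    simp only [SetLike.mem_coe, LinearMap.mem_ker]
    ext z
    have hr0 : r (ι x) = 0 := by
      ext w
      rw [LinearMap.zero_apply, h25, hx, zero_mul]
    rw [LinearMap.zero_apply, h21 (ι x) h z, hr0]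
    simp
  exact ⟨S.liftQ r hle, fun h x => rfl⟩
end

section
/- Let H be a Hopf algebra, K ⊆ H a Hopf subalgebra, and π : H → K a K-linear (for the left K-module structure of H by multiplication) convolution-invertible map. Then π'(h) := π(h₁) (ε ∘ π⁻¹)(h₂) defines a K-linear convolution-invertible map π' : H → K satisfying ε ∘ π' = ε. -/
/-!
Everything happens in convolution algebras. Postcomposition with the algebra maps
`ε : K → 𝕜` and `η : 𝕜 → K` is multiplicative for convolution, and `ε ∘ η = id`; hence
`π' = π ⋆ η(ε ∘ π⁻¹)` has convolution inverse `η(ε ∘ π) ⋆ π⁻¹`, and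
`ε ∘ π' = (ε ∘ π) ⋆ (ε ∘ π⁻¹) = ε`.

For `K`-linearity, `Δ(x h) = x₁ h₁ ⊗ x₂ h₂`. Since `ε ∘ π` satisfies
`(ε ∘ π)(x h) = ε(x) (ε ∘ π)(h)`, so does its convolution inverse `ε ∘ π⁻¹`, and the
convolution of the `K`-linear map `π` with a map of this kind is again `K`-linear.
-/

open Coalgebra TensorProduct WithConv

namespace AlgHom

variable {R A B C : Type*} [CommSemiring R] [Semiring A] [Algebra R A] [Semiring B] [Algebra R B]
  [AddCommMonoid C] [Module R C] [Coalgebra R C]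

noncomputable def compConv (φ : A →ₐ[R] B) : WithConv (C →ₗ[R] A) →+* WithConv (C →ₗ[R] B) where
  toFun f := toConv (φ.toLinearMap ∘ₗ f.ofConv)
  map_one' := by ext; simp
  map_mul' f g := WithConv.ext (LinearMap.algHom_comp_convMul_distrib φ f g)
  map_zero' := by ext; simp
  map_add' f g := by ext; simp

@[simp]
theorem compConv_apply (φ : A →ₐ[R] B) (f : WithConv (C →ₗ[R] A)) (c : C) :
    φ.compConv f c = φ (f c) := rfl

end AlgHom

namespace LinearMap

section Coalgebra

variable {R A C : Type*} [CommSemiring R] [Semiring A] [Algebra R A]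
  [AddCommMonoid C] [Module R C] [Coalgebra R C]

theorem toConv_mul_toConv_eq_one_iff (f g : C →ₗ[R] A) :
    toConv f * toConv g = 1 ↔ ∀ c, mul' R A (map f g (comul c)) = counit (R := R) c • (1 : A) := by
  simp only [WithConv.ext_iff, LinearMap.ext_iff, convMul_apply, convOne_apply,
    Algebra.algebraMap_eq_smul_one]

theorem convMul_algebraMap_comp_apply (f : WithConv (C →ₗ[R] A)) (g : C →ₗ[R] R) (c : C) :
    (f * toConv (Algebra.linearMap R A ∘ₗ g)) c =
      TensorProduct.rid R A (map f.ofConv g (comul c)) := by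
  rw [convMul_apply]
  induction comul (R := R) c with
  | zero => simp
  | tmul a b => simp [Algebra.algebraMap_eq_smul_one]
  | add s t hs ht => simp only [map_add, hs, ht]

end Coalgebra

variable {R A H K ι κ : Type*} [CommSemiring R] [Semiring A] [Algebra R A]
  [Semiring H] [Bialgebra R H]

theorem convMul_apply_mul {a b : H} (𝓡 : Repr R a ι) (𝓢 : Repr R b κ)
    (f g : WithConv (H →ₗ[R] A)) :
    (f * g) (a * b) = ∑ i ∈ 𝓡.index, ∑ j ∈ 𝓢.index,
      f (𝓡.left i * 𝓢.left j) * g (𝓡.right i * 𝓢.right j) := by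
  rw [(𝓡.mul 𝓢).convMul_apply, Repr.mul_index, Finset.sum_product]
  simp

theorem apply_mul_eq_counit_smul_of_convMul_eq_one [AddCommMonoid K] [Module R K] [Coalgebra R K]
    {F : Type*} [FunLike F K H] [CoalgHomClass F R K H] (ι : F) {f g : WithConv (H →ₗ[R] A)}
    (hfg : f * g = 1) (hgf : g * f = 1)
    (hf : ∀ x h, f (ι x * h) = counit (R := R) x • f h) (x : K) (h : H) :
    g (ι x * h) = counit (R := R) x • g h := by
  set gx : WithConv (H →ₗ[R] A) := toConv (g.ofConv ∘ₗ mulLeft R (ι x))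
  have hf_gx : f * gx = counit (R := R) x • 1 := by
    ext h
    obtain 𝓡 := ℛ R x
    obtain 𝓢 := ℛ R h
    calc (f * gx) h = ∑ j ∈ 𝓢.index, f (𝓢.left j) * g (ι x * 𝓢.right j) := by
          simp [𝓢.convMul_apply, gx]
      _ = ∑ j ∈ 𝓢.index, ∑ i ∈ 𝓡.index,
            f (ι (𝓡.left i) * 𝓢.left j) * g (ι (𝓡.right i) * 𝓢.right j) := by
          conv_lhs => rw [← sum_counit_smul 𝓡]
          simp [hf, Finset.mul_sum, Finset.sum_mul]
      _ = (f * g) (ι x * h) := by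
          rw [convMul_apply_mul (𝓡.induced ι) 𝓢, Finset.sum_comm]; rfl
      _ = _ := by simp [hfg, Bialgebra.counit_mul, Algebra.smul_def, ← map_mul, mul_comm]
  have hgx : gx = counit (R := R) x • g := calc
    gx = g * f * gx := by rw [hgf, one_mul]
    _ = counit (R := R) x • g := by rw [mul_assoc, hf_gx, mul_smul_comm, mul_one]
  exact congr($hgx h)

theorem convMul_apply_mul_eq_mul [Semiring K] [Algebra R K] [Coalgebra R K]
    {F : Type*} [FunLike F K H] [CoalgHomClass F R K H] (ι : F) {f u : WithConv (H →ₗ[R] K)}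
    (hf : ∀ x h, f (ι x * h) = x * f h) (hu : ∀ x h, u (ι x * h) = counit (R := R) x • u h)
    (x : K) (h : H) : (f * u) (ι x * h) = x * (f * u) h := by
  obtain 𝓡 := ℛ R x
  obtain 𝓢 := ℛ R h
  have hx : ∑ i ∈ 𝓡.index, counit (R := R) (𝓡.right i) • 𝓡.left i = x := by
    simpa only [map_sum, TensorProduct.rid_tmul, one_smul] using
      congr(TensorProduct.rid R K $(sum_tmul_counit_eq 𝓡))
  rw [convMul_apply_mul (𝓡.induced ι) 𝓢, 𝓢.convMul_apply]
  conv_rhs => rw [← hx, Finset.sum_mul]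
  refine Finset.sum_congr rfl fun i _ => ?_
  simp [hf, hu, Finset.mul_sum, mul_assoc]

end LinearMap

open LinearMap

theorem cointegral_normalize_counit_general
    {𝕜 H K : Type*} [Field 𝕜] [Ring H] [HopfAlgebra 𝕜 H]
    [Ring K] [HopfAlgebra 𝕜 K]
    (ι : K →ₐc[𝕜] H)
    (π πinv : H →ₗ[𝕜] K)
    (hKlin : ∀ (x : K) (h : H), π (ι x * h) = x * π h)
    (hconv₁ : ∀ h : H, LinearMap.mul' 𝕜 K (TensorProduct.map π πinv (Coalgebra.comul (R := 𝕜) h))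
      = Coalgebra.counit (R := 𝕜) h • (1 : K))
    (hconv₂ : ∀ h : H, LinearMap.mul' 𝕜 K (TensorProduct.map πinv π (Coalgebra.comul (R := 𝕜) h))
      = Coalgebra.counit (R := 𝕜) h • (1 : K)) :
    ∃ π' : H →ₗ[𝕜] K,
      -- π'(h) = π(h₁) • ε(π⁻¹(h₂))
      (∀ h : H, π' h = (TensorProduct.rid 𝕜 K)
          (TensorProduct.map π ((Coalgebra.counit (R := 𝕜)) ∘ₗ πinv)
            (Coalgebra.comul (R := 𝕜) h)))
      -- π' is K-linear
      ∧ (∀ (x : K) (h : H), π' (ι x * h) = x * π' h)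
      -- π' is convolution invertible
      ∧ (∃ π'inv : H →ₗ[𝕜] K,
          (∀ h : H, LinearMap.mul' 𝕜 K
              (TensorProduct.map π' π'inv (Coalgebra.comul (R := 𝕜) h))
            = Coalgebra.counit (R := 𝕜) h • (1 : K))
          ∧ (∀ h : H, LinearMap.mul' 𝕜 K
              (TensorProduct.map π'inv π' (Coalgebra.comul (R := 𝕜) h))
            = Coalgebra.counit (R := 𝕜) h • (1 : K)))
      -- ε ∘ π' = ε
      ∧ (∀ h : H, Coalgebra.counit (R := 𝕜) (π' h) = Coalgebra.counit (R := 𝕜) h) := by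
  have h₁ := (toConv_mul_toConv_eq_one_iff π πinv).2 hconv₁
  have h₂ := (toConv_mul_toConv_eq_one_iff πinv π).2 hconv₂
  set ε' := (Bialgebra.counitAlgHom 𝕜 K).compConv (C := H)
  set η' := (Algebra.ofId 𝕜 K).compConv (C := H)
  have hεη : ∀ φ, ε' (η' φ) = φ := fun φ => by ext; simp [ε', η']
  have hπinv : ∀ x h, ε' (toConv πinv) (ι x * h) = counit (R := 𝕜) x • ε' (toConv πinv) h := by
    refine apply_mul_eq_counit_smul_of_convMul_eq_one ι (f := ε' (toConv π)) ?_ ?_ ?_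
    · rw [← map_mul, h₁, map_one]
    · rw [← map_mul, h₂, map_one]
    · intro x h
      simp [ε', hKlin, Bialgebra.counit_mul]
  set π' := toConv π * η' (ε' (toConv πinv))
  set π'inv := η' (ε' (toConv π)) * toConv πinv
  have hπ'π'inv : π' * π'inv = 1 := by
    rw [mul_assoc, ← mul_assoc (η' _), ← map_mul, ← map_mul, h₂, map_one, map_one, one_mul, h₁]
  have hπ'invπ' : π'inv * π' = 1 := by
    rw [mul_assoc, ← mul_assoc (toConv πinv), h₂, one_mul, ← map_mul, ← map_mul, h₁, map_one,
      map_one]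
  have hεπ' : ε' π' = 1 := by
    rw [map_mul, hεη, ← map_mul, h₁, map_one]
  refine ⟨π'.ofConv, convMul_algebraMap_comp_apply _ _, fun x h => ?_,
    ⟨π'inv.ofConv, (toConv_mul_toConv_eq_one_iff _ _).1 hπ'π'inv,
      (toConv_mul_toConv_eq_one_iff _ _).1 hπ'invπ'⟩, fun h => ?_⟩
  · refine convMul_apply_mul_eq_mul ι hKlin (fun x h => ?_) x h
    simp [η', hπinv, Algebra.smul_def]
  · simpa only [ε', AlgHom.compConv_apply, convOne_apply, Algebra.algebraMap_self,
      RingHom.id_apply, Bialgebra.counitAlgHom_apply] using congr($hεπ' h)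

/-- Remark 2.9 (1): If π : H → K is a K-linear convolution-invertible map,
then π'(h) := π(h₁)(ε∘π⁻¹)(h₂) is a K-linear convolution-invertible map with ε∘π' = ε. -/
theorem cointegral_normalize_counit
    {𝕜 H K : Type*} [Field 𝕜] [Ring H] [HopfAlgebra 𝕜 H]
    [Ring K] [HopfAlgebra 𝕜 K]
    (ι : K →ₐc[𝕜] H) (hι : Function.Injective ι)
    (π πinv : H →ₗ[𝕜] K)
    (hKlin : ∀ (x : K) (h : H), π (ι x * h) = x * π h)
    (hconv₁ : ∀ h : H, LinearMap.mul' 𝕜 K (TensorProduct.map π πinv (Coalgebra.comul (R := 𝕜) h))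
      = Coalgebra.counit (R := 𝕜) h • (1 : K))
    (hconv₂ : ∀ h : H, LinearMap.mul' 𝕜 K (TensorProduct.map πinv π (Coalgebra.comul (R := 𝕜) h))
      = Coalgebra.counit (R := 𝕜) h • (1 : K)) :
    ∃ π' : H →ₗ[𝕜] K,
      -- π'(h) = π(h₁) • ε(π⁻¹(h₂))
      (∀ h : H, π' h = (TensorProduct.rid 𝕜 K)
          (TensorProduct.map π ((Coalgebra.counit (R := 𝕜)) ∘ₗ πinv)
            (Coalgebra.comul (R := 𝕜) h)))
      -- π' is K-linear
      ∧ (∀ (x : K) (h : H), π' (ι x * h) = x * π' h)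
      -- π' is convolution invertible
      ∧ (∃ π'inv : H →ₗ[𝕜] K,
          (∀ h : H, LinearMap.mul' 𝕜 K
              (TensorProduct.map π' π'inv (Coalgebra.comul (R := 𝕜) h))
            = Coalgebra.counit (R := 𝕜) h • (1 : K))
          ∧ (∀ h : H, LinearMap.mul' 𝕜 K
              (TensorProduct.map π'inv π' (Coalgebra.comul (R := 𝕜) h))
            = Coalgebra.counit (R := 𝕜) h • (1 : K)))
      -- ε ∘ π' = ε
      ∧ (∀ h : H, Coalgebra.counit (R := 𝕜) (π' h) = Coalgebra.counit (R := 𝕜) h) :=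
  cointegral_normalize_counit_general ι π πinv hKlin hconv₁ hconv₂
end

section
/- Let H be a Hopf algebra, (K, r) a braided central Hopf subalgebra, π : H → K a cointegral with π(1) = 1 and ε∘π = ε, and let ν : H → Q := H/K⁺H be the canonical projection of coalgebras. Then j : Q → H, j(h̄) := π⁻¹(h₁)h₂, is a well-defined coalgebra section of ν, i.e. ν ∘ j = id_Q. -/
/-! For `k ∈ K` one has `π⁻¹(k h) = π⁻¹(h) S(k)`: on the coalgebra `K ⊗ H`, the map
`k ⊗ h ↦ π⁻¹(k h)` is a left convolution inverse of `k ⊗ h ↦ π(k h) = k π(h)` (pull back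
`π⁻¹ * π = ε` along the coalgebra map `k ⊗ h ↦ k h`), while `k ⊗ h ↦ π⁻¹(h) S(k)` is a right one.
Hence `j(k h) = π⁻¹(h₁) S(k₁) k₂ h₂ = ε(k) j(h)`, so `j` kills `K⁺H` and descends to `Q`.
Applying the algebra map `ε` to `π * π⁻¹ = ε` gives `ε ∘ π⁻¹ = ε`, and then
`ν(π⁻¹(h₁) h₂) = ε(π⁻¹(h₁)) ν(h₂) = ν(h)`. -/

open TensorProduct Coalgebra WithConv

section Convolution

variable {R A B C : Type*} [CommSemiring R] [Semiring A] [Algebra R A]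
  [AddCommMonoid B] [Module R B] [Coalgebra R B] [AddCommMonoid C] [Module R C] [Coalgebra R C]

lemma LinearMap.toConv_mul_toConv_eq_one_iff_s9 {f g : C →ₗ[R] A} :
    toConv f * toConv g = 1 ↔
      ∀ c : C, mul' R A (map f g (comul c)) = counit (R := R) c • (1 : A) := by
  simp [WithConv.ext_iff, LinearMap.ext_iff, Algebra.algebraMap_eq_smul_one]

lemma LinearMap.toConv_comp_mul_toConv_comp_eq_one {f g : C →ₗ[R] A} (φ : B →ₗc[R] C)
    (hfg : toConv f * toConv g = 1) :
    toConv (f ∘ₗ φ.toLinearMap) * toConv (g ∘ₗ φ.toLinearMap) = 1 := by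
  calc _ = toConv ((toConv f * toConv g).ofConv ∘ₗ φ.toLinearMap) := by
        rw [convMul_comp_coalgHom_distrib]
    _ = 1 := by rw [hfg]; ext; simp

end Convolution

section Counit

variable {R A C : Type*} [CommSemiring R] [Semiring A] [Bialgebra R A]
  [AddCommMonoid C] [Module R C] [Coalgebra R C]

lemma LinearMap.counit_comp_eq_of_toConv_mul_eq_one {f g : C →ₗ[R] A}
    (hfg : toConv f * toConv g = 1) (hf : counit ∘ₗ f = counit) : counit ∘ₗ g = counit := by
  have hcounit : toConv (counit : C →ₗ[R] R) = 1 := by ext; simp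
  have hdistrib := algHom_comp_convMul_distrib (Bialgebra.counitAlgHom R A) (toConv f) (toConv g)
  simp only [Bialgebra.toLinearMap_counitAlgHom, hfg, hf, hcounit, one_mul] at hdistrib
  apply toConv_injective
  rw [hcounit, ← hdistrib]
  ext; simp

end Counit

namespace CointegralSection

variable {𝕜 H K : Type*} [Field 𝕜] [Ring H] [HopfAlgebra 𝕜 H] [Ring K] [HopfAlgebra 𝕜 K]

noncomputable def leftMulCoalgHom (ι : K →ₐc[𝕜] H) : K ⊗[𝕜] H →ₗc[𝕜] H :=
  (Bialgebra.mulCoalgHom 𝕜 H).comp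
    (Coalgebra.TensorProduct.map (ι : K →ₗc[𝕜] H) (CoalgHom.id 𝕜 H))

@[simp] lemma leftMulCoalgHom_tmul (ι : K →ₐc[𝕜] H) (x : K) (h : H) :
    leftMulCoalgHom ι (x ⊗ₜ h) = ι x * h := rfl

lemma convInv_apply_mul_eq_mul_antipode (ι : K →ₐc[𝕜] H) {π πinv : H →ₗ[𝕜] K}
    (hKlin : ∀ (x : K) (h : H), π (ι x * h) = x * π h)
    (hπ : toConv π * toConv πinv = 1) (hπinv : toConv πinv * toConv π = 1) (x : K) (h : H) :
    πinv (ι x * h) = πinv h * HopfAlgebra.antipode 𝕜 x := by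
  set φ := leftMulCoalgHom ι
  have hleft := LinearMap.toConv_comp_mul_toConv_comp_eq_one φ hπinv
  have hright : toConv (π ∘ₗ φ.toLinearMap) *
      toConv (LinearMap.mul' 𝕜 K ∘ₗ map πinv (HopfAlgebra.antipode 𝕜) ∘ₗ
        (TensorProduct.comm 𝕜 K H).toLinearMap) = 1 := by
    ext k a
    have hπh : ∑ j ∈ (ℛ 𝕜 a).index, π ((ℛ 𝕜 a).left j) * πinv ((ℛ 𝕜 a).right j) =
        algebraMap 𝕜 K (counit a) := by
      rw [← (ℛ 𝕜 a).convMul_apply (toConv π) (toConv πinv), hπ]; rfl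
    calc _ = ∑ i ∈ (ℛ 𝕜 k).index, (ℛ 𝕜 k).left i *
          (∑ j ∈ (ℛ 𝕜 a).index, π ((ℛ 𝕜 a).left j) * πinv ((ℛ 𝕜 a).right j)) *
            HopfAlgebra.antipode 𝕜 ((ℛ 𝕜 k).right i) := by
          simp [((ℛ 𝕜 k).tmul (ℛ 𝕜 a)).convMul_apply, φ, Finset.sum_product, hKlin,
            Finset.mul_sum, Finset.sum_mul, mul_assoc]
      _ = _ := by
          simp [hπh, Algebra.algebraMap_eq_smul_one, ← Finset.smul_sum,
            HopfAlgebra.sum_mul_antipode_eq_smul, smul_smul]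
  exact congr($(left_inv_eq_right_inv hleft hright) (x ⊗ₜ h))

noncomputable def cointegralSection (ι : K →ₐc[𝕜] H) (πinv : H →ₗ[𝕜] K) : H →ₗ[𝕜] H :=
  (toConv (ι.toLinearMap ∘ₗ πinv) * toConv LinearMap.id).ofConv

lemma cointegralSection_apply_mul (ι : K →ₐc[𝕜] H) {π πinv : H →ₗ[𝕜] K}
    (hKlin : ∀ (x : K) (h : H), π (ι x * h) = x * π h)
    (hπ : toConv π * toConv πinv = 1) (hπinv : toConv πinv * toConv π = 1) (x : K) (h : H) :
    cointegralSection ι πinv (ι x * h) = counit (R := 𝕜) x • cointegralSection ι πinv h := by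
  have hx : ∑ i ∈ (ℛ 𝕜 x).index,
      ι (HopfAlgebra.antipode 𝕜 ((ℛ 𝕜 x).left i)) * ι ((ℛ 𝕜 x).right i) =
        counit (R := 𝕜) x • (1 : H) := by
    simp_rw [← map_mul, ← map_sum, HopfAlgebra.sum_antipode_mul_eq_smul, map_smul, map_one]
  calc cointegralSection ι πinv (ι x * h)
      = ∑ i ∈ (ℛ 𝕜 x).index, ∑ j ∈ (ℛ 𝕜 h).index, ι (πinv ((ℛ 𝕜 h).left j)) *
          ι (HopfAlgebra.antipode 𝕜 ((ℛ 𝕜 x).left i)) *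
            (ι ((ℛ 𝕜 x).right i) * (ℛ 𝕜 h).right j) := by
        rw [cointegralSection, (((ℛ 𝕜 x).induced ι).mul (ℛ 𝕜 h)).convMul_apply]
        simp [convInv_apply_mul_eq_mul_antipode ι hKlin hπ hπinv, Finset.sum_product,
          BialgHom.toCoalgHom_apply]
    _ = ∑ j ∈ (ℛ 𝕜 h).index, ι (πinv ((ℛ 𝕜 h).left j)) *
          (∑ i ∈ (ℛ 𝕜 x).index,
            ι (HopfAlgebra.antipode 𝕜 ((ℛ 𝕜 x).left i)) * ι ((ℛ 𝕜 x).right i)) *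
              (ℛ 𝕜 h).right j := by
        rw [Finset.sum_comm]
        simp only [Finset.mul_sum, Finset.sum_mul, mul_assoc]
    _ = counit (R := 𝕜) x • cointegralSection ι πinv h := by
        rw [hx, cointegralSection, (ℛ 𝕜 h).convMul_apply]
        simp [Finset.smul_sum, BialgHom.toCoalgHom_apply]

lemma mkQ_mul_eq_counit_smul {ι : K →ₐc[𝕜] H} {N : Submodule 𝕜 H}
    (hN : ∀ x h, counit (R := 𝕜) x = 0 → ι x * h ∈ N) (x : K) (h : H) :
    N.mkQ (ι x * h) = counit (R := 𝕜) x • N.mkQ h := by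
  have hmem : ι (x - counit (R := 𝕜) x • 1) * h ∈ N := hN _ _ (by simp)
  rw [← sub_eq_zero, ← map_smul, ← map_sub, Submodule.mkQ_apply, Submodule.Quotient.mk_eq_zero]
  simpa [sub_mul] using hmem

lemma mkQ_cointegralSection {ι : K →ₐc[𝕜] H} {πinv : H →ₗ[𝕜] K} {N : Submodule 𝕜 H}
    (hN : ∀ x h, counit (R := 𝕜) x = 0 → ι x * h ∈ N) (hπinv : counit ∘ₗ πinv = counit)
    (h : H) : N.mkQ (cointegralSection ι πinv h) = N.mkQ h := by
  conv_rhs => rw [← Coalgebra.sum_counit_smul (ℛ 𝕜 h)]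
  rw [cointegralSection, (ℛ 𝕜 h).convMul_apply]
  simp [mkQ_mul_eq_counit_smul hN, BialgHom.toCoalgHom_apply,
    ← LinearMap.comp_apply (counit (R := 𝕜)) πinv, hπinv]

end CointegralSection

open CointegralSection in
theorem section_j_well_defined_general
    {𝕜 H K : Type*} [Field 𝕜] [Ring H] [HopfAlgebra 𝕜 H]
    [Ring K] [HopfAlgebra 𝕜 K]
    (ι : K →ₐc[𝕜] H)
    -- π is a cointegral with π(1) = 1 and ε ∘ π = ε
    (π πinv : H →ₗ[𝕜] K)
    (hKlin : ∀ (x : K) (h : H), π (ι x * h) = x * π h)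
    (hconv₁ : ∀ h : H, LinearMap.mul' 𝕜 K (TensorProduct.map π πinv (Coalgebra.comul (R := 𝕜) h))
      = Coalgebra.counit (R := 𝕜) h • (1 : K))
    (hconv₂ : ∀ h : H, LinearMap.mul' 𝕜 K (TensorProduct.map πinv π (Coalgebra.comul (R := 𝕜) h))
      = Coalgebra.counit (R := 𝕜) h • (1 : K))
    (hεπ : ∀ h : H, Coalgebra.counit (R := 𝕜) (π h) = Coalgebra.counit (R := 𝕜) h) :
    ∀ N : Submodule 𝕜 H,
      N = Submodule.span 𝕜
        {y : H | ∃ x : K, ∃ h : H, Coalgebra.counit (R := 𝕜) x = 0 ∧ y = ι x * h} →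
      ∃ j : (H ⧸ N) →ₗ[𝕜] H,
        -- j(h̄) = π⁻¹(h₁) h₂
        (∀ h : H, j (Submodule.Quotient.mk h)
          = (LinearMap.mul' 𝕜 H) (TensorProduct.map (ι.toLinearMap ∘ₗ πinv) LinearMap.id
              (Coalgebra.comul (R := 𝕜) h)))
        -- ν ∘ j = id
        ∧ (∀ q : H ⧸ N, Submodule.Quotient.mk (j q) = q) := by
  intro N hN
  have hπ := LinearMap.toConv_mul_toConv_eq_one_iff_s9.mpr hconv₁
  have hπinv := LinearMap.toConv_mul_toConv_eq_one_iff_s9.mpr hconv₂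
  have hεπinv := LinearMap.counit_comp_eq_of_toConv_mul_eq_one hπ (LinearMap.ext hεπ)
  have hgen : ∀ x h, counit (R := 𝕜) x = 0 → ι x * h ∈ N := fun x h hx =>
    hN ▸ Submodule.subset_span ⟨x, h, hx, rfl⟩
  have hker : N ≤ LinearMap.ker (cointegralSection ι πinv) := by
    rw [hN, Submodule.span_le]
    rintro _ ⟨x, h, hx, rfl⟩
    simp [cointegralSection_apply_mul ι hKlin hπ hπinv, hx]
  refine ⟨N.liftQ _ hker, fun h => rfl, fun q => ?_⟩
  obtain ⟨h, rfl⟩ := N.mkQ_surjective q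
  exact mkQ_cointegralSection hgen hεπinv h

/-- For a braided central Hopf subalgebra with a normalized cointegral π,
the map j(h̄) = π⁻¹(h₁)h₂ is a well-defined section of the projection ν : H → H/K⁺H. -/
theorem section_j_well_defined
    {𝕜 H K : Type*} [Field 𝕜] [Ring H] [HopfAlgebra 𝕜 H]
    [Ring K] [HopfAlgebra 𝕜 K]
    (ι : K →ₐc[𝕜] H) (hι : Function.Injective ι)
    (r : H →ₗ[𝕜] K →ₗ[𝕜] 𝕜)
    -- (2.1): r(hh', k) = r(h', k₁) r(h, k₂)
    (h21 : ∀ (h h' : H) (x : K), r (h * h') x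
      = LinearMap.mul' 𝕜 𝕜 (TensorProduct.map (r h') (r h) (Coalgebra.comul (R := 𝕜) x)))
    -- (2.2): r(h, kk') = r(h₁, k) r(h₂, k')
    (h22 : ∀ (h : H) (x y : K), r h (x * y)
      = LinearMap.mul' 𝕜 𝕜 (TensorProduct.map (r.flip x) (r.flip y) (Coalgebra.comul (R := 𝕜) h)))
    -- (2.3): r(h,1) = ε(h), r(1,k) = ε(k)
    (h23a : ∀ h : H, r h 1 = Coalgebra.counit (R := 𝕜) h)
    (h23b : ∀ x : K, r 1 x = Coalgebra.counit (R := 𝕜) x)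
    -- (2.4): r(h₁, k₁) k₂ h₂ = h₁ k₁ r(h₂, k₂)
    (h24 : ∀ (h : H) (x : K),
      (TensorProduct.lid 𝕜 H) (TensorProduct.map (TensorProduct.lift r)
          ((LinearMap.mul' 𝕜 H) ∘ₗ (TensorProduct.map ι.toLinearMap LinearMap.id)
            ∘ₗ (TensorProduct.comm 𝕜 H K).toLinearMap)
          ((TensorProduct.tensorTensorTensorComm 𝕜 H H K K)
            (Coalgebra.comul (R := 𝕜) h ⊗ₜ[𝕜] Coalgebra.comul (R := 𝕜) x)))
        = (TensorProduct.rid 𝕜 H) (TensorProduct.map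
            ((LinearMap.mul' 𝕜 H) ∘ₗ (TensorProduct.map LinearMap.id ι.toLinearMap))
            (TensorProduct.lift r)
            ((TensorProduct.tensorTensorTensorComm 𝕜 H H K K)
              (Coalgebra.comul (R := 𝕜) h ⊗ₜ[𝕜] Coalgebra.comul (R := 𝕜) x))))
    -- (2.5): r(k, k') = ε(k)ε(k')
    (h25 : ∀ x y : K, r (ι x) y = Coalgebra.counit (R := 𝕜) x * Coalgebra.counit (R := 𝕜) y)
    -- π is a cointegral with π(1) = 1 and ε ∘ π = ε
    (π πinv : H →ₗ[𝕜] K)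
    (hKlin : ∀ (x : K) (h : H), π (ι x * h) = x * π h)
    (hconv₁ : ∀ h : H, LinearMap.mul' 𝕜 K (TensorProduct.map π πinv (Coalgebra.comul (R := 𝕜) h))
      = Coalgebra.counit (R := 𝕜) h • (1 : K))
    (hconv₂ : ∀ h : H, LinearMap.mul' 𝕜 K (TensorProduct.map πinv π (Coalgebra.comul (R := 𝕜) h))
      = Coalgebra.counit (R := 𝕜) h • (1 : K))
    (hπ1 : π 1 = 1)
    (hεπ : ∀ h : H, Coalgebra.counit (R := 𝕜) (π h) = Coalgebra.counit (R := 𝕜) h) :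
    ∀ N : Submodule 𝕜 H,
      N = Submodule.span 𝕜
        {y : H | ∃ x : K, ∃ h : H, Coalgebra.counit (R := 𝕜) x = 0 ∧ y = ι x * h} →
      ∃ j : (H ⧸ N) →ₗ[𝕜] H,
        -- j(h̄) = π⁻¹(h₁) h₂
        (∀ h : H, j (Submodule.Quotient.mk h)
          = (LinearMap.mul' 𝕜 H) (TensorProduct.map (ι.toLinearMap ∘ₗ πinv) LinearMap.id
              (Coalgebra.comul (R := 𝕜) h)))
        -- ν ∘ j = id
        ∧ (∀ q : H ⧸ N, Submodule.Quotient.mk (j q) = q) :=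
  section_j_well_defined_general ι π πinv hKlin hconv₁ hconv₂ hεπ
end

section
/- Let H be a Hopf algebra and (K, r) a braided central Hopf subalgebra. Let V be simultaneously a left K-module (action ⊣) and left H-comodule such that the action K ⊗ V → V is a morphism of H-comodules (K with coaction by Δ into H ⊗ K). Define v ↼ x := r(v₋₁, x₁) (x₂ ⊣ v₀). Then ↼ is a right K-module structure on V. -/
/-!
Write `λ v = v₋₁ ⊗ v₀`. Taking `h = ι x` in (2.4) and collapsing both sides with (2.5) shows that
`K` is commutative. Since (2.1) and (2.5) give `r(ι(u) g, z) = ε(u) r(g, z)`, the comodule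
compatibility of `⊣` then makes `↼ y` commute with the left action: `(x ⊣ u) ↼ y = x ⊣ (u ↼ y)`.
Hence `(v ↼ x) ↼ y = r(v₋₁, x₁) x₂ ⊣ (v₀ ↼ y) = r(v₋₁, x₁) r(v₀₋₁, y₁) x₂y₂ ⊣ v₀₀`, and
coassociativity of `λ` together with (2.2) turns this into `r(v₋₁, x₁y₁) x₂y₂ ⊣ v₀ = v ↼ xy`.
The unit law is (2.3) combined with the counit axiom of `λ`.
-/

open TensorProduct

section PairAction

variable {R H K V : Type*} [CommSemiring R] [AddCommMonoid H] [Module R H]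
  [AddCommMonoid K] [Module R K] [AddCommMonoid V] [Module R V]

/-- `v ↼ x` is `pairAction r a (Δ x) (λ v)`. -/
noncomputable def pairAction (r : H →ₗ[R] K →ₗ[R] R) (a : K →ₗ[R] V →ₗ[R] V) :
    K ⊗[R] K →ₗ[R] H ⊗[R] V →ₗ[R] V :=
  TensorProduct.curry ((TensorProduct.lid R V).toLinearMap ∘ₗ
    TensorProduct.map (TensorProduct.lift r ∘ₗ (TensorProduct.comm R K H).toLinearMap)
      (TensorProduct.lift a) ∘ₗ (TensorProduct.tensorTensorTensorComm R K K H V).toLinearMap)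

variable (r : H →ₗ[R] K →ₗ[R] R) (a : K →ₗ[R] V →ₗ[R] V)

@[simp]
lemma pairAction_tmul_tmul (k k' : K) (h : H) (v : V) :
    pairAction r a (k ⊗ₜ k') (h ⊗ₜ v) = r h k • a k' v := rfl

lemma comp_pairAction_of_commute {f : V →ₗ[R] V} (hf : ∀ k, f ∘ₗ a k = a k ∘ₗ f)
    (T : K ⊗[R] K) :
    f ∘ₗ pairAction r a T = pairAction r a T ∘ₗ f.lTensor H := by
  induction T using TensorProduct.induction_on with
  | zero => simp
  | add T T' hT hT' => simp only [map_add, LinearMap.comp_add, LinearMap.add_comp, hT, hT']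
  | tmul k k' =>
    ext h v
    simp [← LinearMap.comp_apply (f := f), hf]

end PairAction

section Braided

variable {R H K V : Type*} [CommSemiring R] [Semiring H] [Bialgebra R H]
  [Semiring K] [Bialgebra R K] [AddCommMonoid V] [Module R V]

/-- The compatibility of `⊣` with `λ` reads `λ (x ⊣ v) = diagAction ι a (Δ x) (λ v)`. -/
noncomputable def diagAction (ι : K →ₗ[R] H) (a : K →ₗ[R] V →ₗ[R] V) :
    K ⊗[R] K →ₗ[R] H ⊗[R] V →ₗ[R] H ⊗[R] V :=
  TensorProduct.curry (TensorProduct.map (LinearMap.mul' R H ∘ₗ TensorProduct.map ι LinearMap.id)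
      (TensorProduct.lift a) ∘ₗ (TensorProduct.tensorTensorTensorComm R K K H V).toLinearMap)

@[simp]
lemma diagAction_tmul_tmul (ι : K →ₗ[R] H) (a : K →ₗ[R] V →ₗ[R] V) (k k' : K) (h : H) (v : V) :
    diagAction ι a (k ⊗ₜ k') (h ⊗ₜ v) = (ι k * h) ⊗ₜ a k' v := rfl

variable {r : H →ₗ[R] K →ₗ[R] R} {a : K →ₗ[R] V →ₗ[R] V}

lemma pairAction_one (h23a : ∀ h, r h 1 = Coalgebra.counit h) (ha1 : ∀ v, a 1 v = v) :
    pairAction r a 1 = (TensorProduct.lid R V).toLinearMap ∘ₗ Coalgebra.counit.rTensor V := by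
  ext h v
  simp [Algebra.TensorProduct.one_def, h23a, ha1]

lemma pairAction_mul
    (h22 : ∀ h x y, r h (x * y)
      = LinearMap.mul' R R (TensorProduct.map (r.flip x) (r.flip y) (Coalgebra.comul h)))
    (hamul : ∀ x y v, a (x * y) v = a x (a y v)) (S T : K ⊗[R] K) :
    pairAction r a (S * T) = pairAction r a S ∘ₗ (pairAction r a T).lTensor H ∘ₗ
      (TensorProduct.assoc R H H V).toLinearMap ∘ₗ Coalgebra.comul.rTensor V := by
  induction S using TensorProduct.induction_on with
  | zero => simp
  | add S S' hS hS' => simp only [add_mul, map_add, LinearMap.add_comp, hS, hS']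
  | tmul s s' =>
  induction T using TensorProduct.induction_on with
  | zero => simp
  | add T T' hT hT' =>
    simp only [mul_add, map_add, LinearMap.lTensor_add, LinearMap.comp_add, LinearMap.add_comp,
      hT, hT']
  | tmul t t' =>
    refine TensorProduct.ext' fun h v => ?_
    simp only [LinearMap.comp_apply, LinearEquiv.coe_coe, LinearMap.rTensor_tmul,
      Algebra.TensorProduct.tmul_mul_tmul, pairAction_tmul_tmul]
    rw [h22, hamul]
    induction Coalgebra.comul (R := R) h using TensorProduct.induction_on with
    | zero => simp
    | add W W' hW hW' => simp only [map_add, add_smul, add_tmul, hW, hW']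
    | tmul g g' => simp [smul_smul, mul_comm]

lemma pairing_mul_eq_counit_mul (ι : K →ₗ[R] H)
    (h21 : ∀ (h h' : H) (x : K), r (h * h') x
      = LinearMap.mul' R R (TensorProduct.map (r h') (r h) (Coalgebra.comul x)))
    (h25 : ∀ x y : K, r (ι x) y = Coalgebra.counit x * Coalgebra.counit y)
    (u : K) (g : H) (z : K) :
    r (ι u * g) z = Coalgebra.counit u * r g z := by
  have hru : r (ι u) = Coalgebra.counit (R := R) u • (Coalgebra.counit : K →ₗ[R] R) :=
    LinearMap.ext fun y => by rw [LinearMap.smul_apply, smul_eq_mul, h25]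
  rw [h21, hru, TensorProduct.map_smul_right, LinearMap.smul_apply, map_smul]
  rw [← LinearMap.rTensor_comp_lTensor, LinearMap.comp_apply, Coalgebra.lTensor_counit_comul]
  simp

lemma pairAction_diagAction (ι : K →ₗ[R] H)
    (h21 : ∀ (h h' : H) (x : K), r (h * h') x
      = LinearMap.mul' R R (TensorProduct.map (r h') (r h) (Coalgebra.comul x)))
    (h25 : ∀ x y : K, r (ι x) y = Coalgebra.counit x * Coalgebra.counit y)
    (hamul : ∀ x y v, a (x * y) v = a x (a y v)) (S T : K ⊗[R] K) (t : H ⊗[R] V) :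
    pairAction r a S (diagAction ι a T t)
      = pairAction r a (S * (1 ⊗ₜ TensorProduct.lid R K (Coalgebra.counit.rTensor K T))) t := by
  induction S using TensorProduct.induction_on with
  | zero => simp
  | add S S' hS hS' => simp only [add_mul, map_add, LinearMap.add_apply, hS, hS']
  | tmul s s' =>
  induction T using TensorProduct.induction_on with
  | zero => simp
  | add T T' hT hT' => simp only [map_add, tmul_add, mul_add, LinearMap.add_apply, hT, hT']
  | tmul k k' =>
  induction t using TensorProduct.induction_on with
  | zero => simp
  | add t t' ht ht' => simp only [map_add, ht, ht']
  | tmul h v =>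
    simp [pairing_mul_eq_counit_mul ι h21 h25, hamul, smul_smul]

lemma pairAction_mul_one_tmul (hamul : ∀ x y v, a (x * y) v = a x (a y v)) {x : K}
    (hx : ∀ y, y * x = x * y) (S : K ⊗[R] K) :
    pairAction r a (S * (1 ⊗ₜ x)) = a x ∘ₗ pairAction r a S := by
  induction S using TensorProduct.induction_on with
  | zero => simp
  | add S S' hS hS' => simp only [add_mul, map_add, LinearMap.comp_add, hS, hS']
  | tmul s s' =>
    refine TensorProduct.ext' fun h v => ?_
    simp [hx, hamul]

lemma mul_comm_of_braiding (ι : K →ₐc[R] H) (hι : Function.Injective ι)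
    (h24 : ∀ (h : H) (x : K),
      (TensorProduct.lid R H) (TensorProduct.map (TensorProduct.lift r)
          ((LinearMap.mul' R H) ∘ₗ (TensorProduct.map ι.toLinearMap LinearMap.id)
            ∘ₗ (TensorProduct.comm R H K).toLinearMap)
          ((TensorProduct.tensorTensorTensorComm R H H K K)
            (Coalgebra.comul h ⊗ₜ[R] Coalgebra.comul x)))
        = (TensorProduct.rid R H) (TensorProduct.map
            ((LinearMap.mul' R H) ∘ₗ (TensorProduct.map LinearMap.id ι.toLinearMap))
            (TensorProduct.lift r)
            ((TensorProduct.tensorTensorTensorComm R H H K K)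
              (Coalgebra.comul h ⊗ₜ[R] Coalgebra.comul x))))
    (h25 : ∀ x y : K, r (ι x) y = Coalgebra.counit x * Coalgebra.counit y) (x y : K) :
    x * y = y * x := by
  -- both sides of (2.4) at `h = ι x`, with `Δ (ι x) = (ι ⊗ ι) (Δ x)` generalized to any `S`
  have hl : ∀ S T : K ⊗[R] K, (TensorProduct.lid R H) (TensorProduct.map (TensorProduct.lift r)
      ((LinearMap.mul' R H) ∘ₗ (TensorProduct.map ι.toLinearMap LinearMap.id)
        ∘ₗ (TensorProduct.comm R H K).toLinearMap)
      ((TensorProduct.tensorTensorTensorComm R H H K K)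
        (TensorProduct.map (ι : K →ₗ[R] H) ι S ⊗ₜ[R] T)))
      = ι (TensorProduct.lid R K (Coalgebra.counit.rTensor K T))
        * ι (TensorProduct.lid R K (Coalgebra.counit.rTensor K S)) := by
    intro S T
    induction S using TensorProduct.induction_on with
    | zero => simp
    | add S S' hS hS' => simp only [map_add, add_tmul, mul_add, hS, hS']
    | tmul s s' =>
    induction T using TensorProduct.induction_on with
    | zero => simp
    | add T T' hT hT' => simp only [map_add, tmul_add, add_mul, hT, hT']
    | tmul t t' => simp [BialgHom.toCoalgHom_apply, h25, smul_smul]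
  have hr : ∀ S T : K ⊗[R] K, (TensorProduct.rid R H) (TensorProduct.map
      ((LinearMap.mul' R H) ∘ₗ (TensorProduct.map LinearMap.id ι.toLinearMap))
      (TensorProduct.lift r)
      ((TensorProduct.tensorTensorTensorComm R H H K K)
        (TensorProduct.map (ι : K →ₗ[R] H) ι S ⊗ₜ[R] T)))
      = ι (TensorProduct.rid R K (Coalgebra.counit.lTensor K S))
        * ι (TensorProduct.rid R K (Coalgebra.counit.lTensor K T)) := by
    intro S T
    induction S using TensorProduct.induction_on with
    | zero => simp
    | add S S' hS hS' => simp only [map_add, add_tmul, add_mul, hS, hS']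
    | tmul s s' =>
    induction T using TensorProduct.induction_on with
    | zero => simp
    | add T T' hT hT' => simp only [map_add, tmul_add, mul_add, hT, hT']
    | tmul t t' => simp [BialgHom.toCoalgHom_apply, h25, smul_smul, mul_comm]
  have h := h24 (ι x) y
  rw [← CoalgHomClass.map_comp_comul_apply, hl, hr] at h
  simp only [Coalgebra.rTensor_counit_comul, Coalgebra.lTensor_counit_comul, lid_tmul, rid_tmul,
    one_smul, ← map_mul] at h
  exact hι h.symm

end Braided

theorem right_action_is_module_general
    {𝕜 H K : Type*} [Field 𝕜] [Ring H] [HopfAlgebra 𝕜 H]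
    [Ring K] [HopfAlgebra 𝕜 K]
    (ι : K →ₐc[𝕜] H) (hι : Function.Injective ι)
    (r : H →ₗ[𝕜] K →ₗ[𝕜] 𝕜)
    -- (2.1): r(hh', k) = r(h', k₁) r(h, k₂)
    (h21 : ∀ (h h' : H) (x : K), r (h * h') x
      = LinearMap.mul' 𝕜 𝕜 (TensorProduct.map (r h') (r h) (Coalgebra.comul (R := 𝕜) x)))
    -- (2.2): r(h, kk') = r(h₁, k) r(h₂, k')
    (h22 : ∀ (h : H) (x y : K), r h (x * y)
      = LinearMap.mul' 𝕜 𝕜 (TensorProduct.map (r.flip x) (r.flip y) (Coalgebra.comul (R := 𝕜) h)))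
    -- (2.3): r(h,1) = ε(h), r(1,k) = ε(k)
    (h23a : ∀ h : H, r h 1 = Coalgebra.counit (R := 𝕜) h)
    -- (2.4): r(h₁, k₁) k₂ h₂ = h₁ k₁ r(h₂, k₂)
    (h24 : ∀ (h : H) (x : K),
      (TensorProduct.lid 𝕜 H) (TensorProduct.map (TensorProduct.lift r)
          ((LinearMap.mul' 𝕜 H) ∘ₗ (TensorProduct.map ι.toLinearMap LinearMap.id)
            ∘ₗ (TensorProduct.comm 𝕜 H K).toLinearMap)
          ((TensorProduct.tensorTensorTensorComm 𝕜 H H K K)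
            (Coalgebra.comul (R := 𝕜) h ⊗ₜ[𝕜] Coalgebra.comul (R := 𝕜) x)))
        = (TensorProduct.rid 𝕜 H) (TensorProduct.map
            ((LinearMap.mul' 𝕜 H) ∘ₗ (TensorProduct.map LinearMap.id ι.toLinearMap))
            (TensorProduct.lift r)
            ((TensorProduct.tensorTensorTensorComm 𝕜 H H K K)
              (Coalgebra.comul (R := 𝕜) h ⊗ₜ[𝕜] Coalgebra.comul (R := 𝕜) x))))
    -- (2.5): r(k, k') = ε(k)ε(k')
    (h25 : ∀ x y : K, r (ι x) y = Coalgebra.counit (R := 𝕜) x * Coalgebra.counit (R := 𝕜) y)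
    -- V is a left K-module in the category of left H-comodules
    {V : Type*} [AddCommGroup V] [Module 𝕜 V]
    (a : K →ₗ[𝕜] V →ₗ[𝕜] V)
    (ha1 : ∀ v : V, a 1 v = v)
    (hamul : ∀ (x y : K) (v : V), a (x * y) v = a x (a y v))
    (lV : V →ₗ[𝕜] H ⊗[𝕜] V)
    (hcoassoc : ∀ v : V,
      (TensorProduct.assoc 𝕜 H H V)
          ((TensorProduct.map (Coalgebra.comul (R := 𝕜)) LinearMap.id) (lV v))
        = (TensorProduct.map LinearMap.id lV) (lV v))
    (hcounit : ∀ v : V,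
      (TensorProduct.lid 𝕜 V)
          ((TensorProduct.map (Coalgebra.counit (R := 𝕜)) LinearMap.id) (lV v)) = v)
    -- the action is a morphism of H-comodules: λ(x ⊣ v) = ι(x₁)v₋₁ ⊗ (x₂ ⊣ v₀)
    (hmor : ∀ (x : K) (v : V),
      lV (a x v) = (TensorProduct.map
          ((LinearMap.mul' 𝕜 H) ∘ₗ (TensorProduct.map ι.toLinearMap LinearMap.id))
          (TensorProduct.lift a))
        ((TensorProduct.tensorTensorTensorComm 𝕜 K K H V)
          ((Coalgebra.comul (R := 𝕜) x) ⊗ₜ[𝕜] (lV v))))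
    -- the map ↼ : v ↼ x = r(v₋₁, x₁)(x₂ ⊣ v₀)
    (ract : V → K → V)
    (hract : ∀ (v : V) (x : K),
      ract v x = (TensorProduct.lid 𝕜 V)
        ((TensorProduct.map
            ((TensorProduct.lift r) ∘ₗ (TensorProduct.comm 𝕜 K H).toLinearMap)
            (TensorProduct.lift a))
          ((TensorProduct.tensorTensorTensorComm 𝕜 K K H V)
            ((Coalgebra.comul (R := 𝕜) x) ⊗ₜ[𝕜] (lV v))))) :
    -- ↼ is a right K-module structure
    (∀ v : V, ract v 1 = v)
    ∧ (∀ (v : V) (x y : K), ract (ract v x) y = ract v (x * y)) := by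
  have hract' : ∀ v x, ract v x = pairAction r a (Coalgebra.comul x) (lV v) := hract
  have hmor' : ∀ x v, lV (a x v) = diagAction (ι : K →ₗ[𝕜] H) a (Coalgebra.comul x) (lV v) :=
    hmor
  refine ⟨fun v => ?_, fun v x y => ?_⟩
  · rw [hract', Bialgebra.comul_one, pairAction_one h23a ha1]
    exact hcounit v
  set ρ : V →ₗ[𝕜] V := pairAction r a (Coalgebra.comul y) ∘ₗ lV
  have hρ : ∀ k, ρ ∘ₗ a k = a k ∘ₗ ρ := fun k => LinearMap.ext fun u => by
    simp only [ρ, LinearMap.comp_apply, hmor', pairAction_diagAction (ι : K →ₗ[𝕜] H) h21 h25 hamul,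
      Coalgebra.rTensor_counit_comul, lid_tmul, one_smul,
      pairAction_mul_one_tmul hamul (fun z => mul_comm_of_braiding ι hι h24 h25 z k)]
  calc ract (ract v x) y = ρ (pairAction r a (Coalgebra.comul x) (lV v)) := by
        rw [hract', hract']; rfl
    _ = pairAction r a (Coalgebra.comul x) (ρ.lTensor H (lV v)) :=
        LinearMap.congr_fun (comp_pairAction_of_commute r a hρ _) _
    _ = pairAction r a (Coalgebra.comul x * Coalgebra.comul y) (lV v) := by
        rw [pairAction_mul h22 hamul]
        simp only [ρ, LinearMap.lTensor_comp, LinearMap.comp_apply]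
        exact congrArg (fun t => pairAction r a _ (LinearMap.lTensor H _ t)) (hcoassoc v).symm
    _ = ract v (x * y) := by rw [hract', Bialgebra.comul_mul]

/-- v ↼ x := r(v₋₁, x₁)(x₂ ⊣ v₀) is a right K-module structure on V. -/
theorem right_action_is_module
    {𝕜 H K : Type*} [Field 𝕜] [Ring H] [HopfAlgebra 𝕜 H]
    [Ring K] [HopfAlgebra 𝕜 K]
    (ι : K →ₐc[𝕜] H) (hι : Function.Injective ι)
    (r : H →ₗ[𝕜] K →ₗ[𝕜] 𝕜)
    -- (2.1): r(hh', k) = r(h', k₁) r(h, k₂)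
    (h21 : ∀ (h h' : H) (x : K), r (h * h') x
      = LinearMap.mul' 𝕜 𝕜 (TensorProduct.map (r h') (r h) (Coalgebra.comul (R := 𝕜) x)))
    -- (2.2): r(h, kk') = r(h₁, k) r(h₂, k')
    (h22 : ∀ (h : H) (x y : K), r h (x * y)
      = LinearMap.mul' 𝕜 𝕜 (TensorProduct.map (r.flip x) (r.flip y) (Coalgebra.comul (R := 𝕜) h)))
    -- (2.3): r(h,1) = ε(h), r(1,k) = ε(k)
    (h23a : ∀ h : H, r h 1 = Coalgebra.counit (R := 𝕜) h)
    (h23b : ∀ x : K, r 1 x = Coalgebra.counit (R := 𝕜) x)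
    -- (2.4): r(h₁, k₁) k₂ h₂ = h₁ k₁ r(h₂, k₂)
    (h24 : ∀ (h : H) (x : K),
      (TensorProduct.lid 𝕜 H) (TensorProduct.map (TensorProduct.lift r)
          ((LinearMap.mul' 𝕜 H) ∘ₗ (TensorProduct.map ι.toLinearMap LinearMap.id)
            ∘ₗ (TensorProduct.comm 𝕜 H K).toLinearMap)
          ((TensorProduct.tensorTensorTensorComm 𝕜 H H K K)
            (Coalgebra.comul (R := 𝕜) h ⊗ₜ[𝕜] Coalgebra.comul (R := 𝕜) x)))
        = (TensorProduct.rid 𝕜 H) (TensorProduct.map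
            ((LinearMap.mul' 𝕜 H) ∘ₗ (TensorProduct.map LinearMap.id ι.toLinearMap))
            (TensorProduct.lift r)
            ((TensorProduct.tensorTensorTensorComm 𝕜 H H K K)
              (Coalgebra.comul (R := 𝕜) h ⊗ₜ[𝕜] Coalgebra.comul (R := 𝕜) x))))
    -- (2.5): r(k, k') = ε(k)ε(k')
    (h25 : ∀ x y : K, r (ι x) y = Coalgebra.counit (R := 𝕜) x * Coalgebra.counit (R := 𝕜) y)
    -- V is a left K-module in the category of left H-comodules
    {V : Type*} [AddCommGroup V] [Module 𝕜 V]
    (a : K →ₗ[𝕜] V →ₗ[𝕜] V)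
    (ha1 : ∀ v : V, a 1 v = v)
    (hamul : ∀ (x y : K) (v : V), a (x * y) v = a x (a y v))
    (lV : V →ₗ[𝕜] H ⊗[𝕜] V)
    (hcoassoc : ∀ v : V,
      (TensorProduct.assoc 𝕜 H H V)
          ((TensorProduct.map (Coalgebra.comul (R := 𝕜)) LinearMap.id) (lV v))
        = (TensorProduct.map LinearMap.id lV) (lV v))
    (hcounit : ∀ v : V,
      (TensorProduct.lid 𝕜 V)
          ((TensorProduct.map (Coalgebra.counit (R := 𝕜)) LinearMap.id) (lV v)) = v)
    -- the action is a morphism of H-comodules: λ(x ⊣ v) = ι(x₁)v₋₁ ⊗ (x₂ ⊣ v₀)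
    (hmor : ∀ (x : K) (v : V),
      lV (a x v) = (TensorProduct.map
          ((LinearMap.mul' 𝕜 H) ∘ₗ (TensorProduct.map ι.toLinearMap LinearMap.id))
          (TensorProduct.lift a))
        ((TensorProduct.tensorTensorTensorComm 𝕜 K K H V)
          ((Coalgebra.comul (R := 𝕜) x) ⊗ₜ[𝕜] (lV v))))
    -- the map ↼ : v ↼ x = r(v₋₁, x₁)(x₂ ⊣ v₀)
    (ract : V → K → V)
    (hract : ∀ (v : V) (x : K),
      ract v x = (TensorProduct.lid 𝕜 V)
        ((TensorProduct.map
            ((TensorProduct.lift r) ∘ₗ (TensorProduct.comm 𝕜 K H).toLinearMap)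
            (TensorProduct.lift a))
          ((TensorProduct.tensorTensorTensorComm 𝕜 K K H V)
            ((Coalgebra.comul (R := 𝕜) x) ⊗ₜ[𝕜] (lV v))))) :
    -- ↼ is a right K-module structure
    (∀ v : V, ract v 1 = v)
    ∧ (∀ (v : V) (x y : K), ract (ract v x) y = ract v (x * y)) :=
  right_action_is_module_general ι hι r h21 h22 h23a h24 h25 a ha1 hamul lV hcoassoc hcounit hmor
    ract hract
end

section
/- In the setting of the previous statement, the right K-action ↼ on V commutes with the left K-action ⊣: (x ⊣ v) ↼ y = x ⊣ (v ↼ y) for all x, y ∈ K, v ∈ V; moreover ↼ is a morphism of H-comodules, i.e. (v ↼ x)₋₁ ⊗ (v ↼ x)₀ = v₋₁ x₁ ⊗ (v₀ ↼ x₂). Hence V is a K-bimodule in the category of left H-comodules. -/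
open TensorProduct
open Coalgebra

set_option maxHeartbeats 2000000
set_option synthInstance.maxHeartbeats 1000000

/-- the right K-action ↼ commutes with the left K-action and is a morphism
of H-comodules, so V is a K-bimodule in the category of left H-comodules. -/
theorem right_action_bimodule_and_comodule_morphism
    {𝕜 H K : Type*} [Field 𝕜] [Ring H] [HopfAlgebra 𝕜 H]
    [Ring K] [HopfAlgebra 𝕜 K]
    (ι : K →ₐc[𝕜] H) (hι : Function.Injective ι)
    (r : H →ₗ[𝕜] K →ₗ[𝕜] 𝕜)
    -- (2.1): r(hh', k) = r(h', k₁) r(h, k₂)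
    (h21 : ∀ (h h' : H) (x : K), r (h * h') x
      = LinearMap.mul' 𝕜 𝕜 (TensorProduct.map (r h') (r h) (Coalgebra.comul (R := 𝕜) x)))
    -- (2.2): r(h, kk') = r(h₁, k) r(h₂, k')
    (h22 : ∀ (h : H) (x y : K), r h (x * y)
      = LinearMap.mul' 𝕜 𝕜 (TensorProduct.map (r.flip x) (r.flip y) (Coalgebra.comul (R := 𝕜) h)))
    -- (2.3): r(h,1) = ε(h), r(1,k) = ε(k)
    (h23a : ∀ h : H, r h 1 = Coalgebra.counit (R := 𝕜) h)
    (h23b : ∀ x : K, r 1 x = Coalgebra.counit (R := 𝕜) x)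
    -- (2.4): r(h₁, k₁) k₂ h₂ = h₁ k₁ r(h₂, k₂)
    (h24 : ∀ (h : H) (x : K),
      (TensorProduct.lid 𝕜 H) (TensorProduct.map (TensorProduct.lift r)
          ((LinearMap.mul' 𝕜 H) ∘ₗ (TensorProduct.map ι.toLinearMap LinearMap.id)
            ∘ₗ (TensorProduct.comm 𝕜 H K).toLinearMap)
          ((TensorProduct.tensorTensorTensorComm 𝕜 H H K K)
            (Coalgebra.comul (R := 𝕜) h ⊗ₜ[𝕜] Coalgebra.comul (R := 𝕜) x)))
        = (TensorProduct.rid 𝕜 H) (TensorProduct.map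
            ((LinearMap.mul' 𝕜 H) ∘ₗ (TensorProduct.map LinearMap.id ι.toLinearMap))
            (TensorProduct.lift r)
            ((TensorProduct.tensorTensorTensorComm 𝕜 H H K K)
              (Coalgebra.comul (R := 𝕜) h ⊗ₜ[𝕜] Coalgebra.comul (R := 𝕜) x))))
    -- (2.5): r(k, k') = ε(k)ε(k')
    (h25 : ∀ x y : K, r (ι x) y = Coalgebra.counit (R := 𝕜) x * Coalgebra.counit (R := 𝕜) y)
    -- V is a left K-module in the category of left H-comodules
    {V : Type*} [AddCommGroup V] [Module 𝕜 V]
    (a : K →ₗ[𝕜] V →ₗ[𝕜] V)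
    (ha1 : ∀ v : V, a 1 v = v)
    (hamul : ∀ (x y : K) (v : V), a (x * y) v = a x (a y v))
    (lV : V →ₗ[𝕜] H ⊗[𝕜] V)
    (hcoassoc : ∀ v : V,
      (TensorProduct.assoc 𝕜 H H V)
          ((TensorProduct.map (Coalgebra.comul (R := 𝕜)) LinearMap.id) (lV v))
        = (TensorProduct.map LinearMap.id lV) (lV v))
    (hcounit : ∀ v : V,
      (TensorProduct.lid 𝕜 V)
          ((TensorProduct.map (Coalgebra.counit (R := 𝕜)) LinearMap.id) (lV v)) = v)
    -- the action is a morphism of H-comodules: λ(x ⊣ v) = ι(x₁)v₋₁ ⊗ (x₂ ⊣ v₀)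
    (hmor : ∀ (x : K) (v : V),
      lV (a x v) = (TensorProduct.map
          ((LinearMap.mul' 𝕜 H) ∘ₗ (TensorProduct.map ι.toLinearMap LinearMap.id))
          (TensorProduct.lift a))
        ((TensorProduct.tensorTensorTensorComm 𝕜 K K H V)
          ((Coalgebra.comul (R := 𝕜) x) ⊗ₜ[𝕜] (lV v))))
    -- the map ↼ (bundled, with ract x v = v ↼ x): v ↼ x = r(v₋₁, x₁)(x₂ ⊣ v₀)
    (ract : K →ₗ[𝕜] V →ₗ[𝕜] V)
    (hract : ∀ (x : K) (v : V),
      ract x v = (TensorProduct.lid 𝕜 V)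
        ((TensorProduct.map
            ((TensorProduct.lift r) ∘ₗ (TensorProduct.comm 𝕜 K H).toLinearMap)
            (TensorProduct.lift a))
          ((TensorProduct.tensorTensorTensorComm 𝕜 K K H V)
            ((Coalgebra.comul (R := 𝕜) x) ⊗ₜ[𝕜] (lV v))))) :
    -- (x ⊣ v) ↼ y = x ⊣ (v ↼ y)
    (∀ (x y : K) (v : V), ract y (a x v) = a x (ract y v))
    -- ↼ is a morphism of H-comodules: λ(v ↼ x) = v₋₁x₁ ⊗ (v₀ ↼ x₂)
    ∧ (∀ (x : K) (v : V),
      lV (ract x v) = (TensorProduct.map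
          ((LinearMap.mul' 𝕜 H) ∘ₗ (TensorProduct.map LinearMap.id ι.toLinearMap))
          ((TensorProduct.lift ract) ∘ₗ (TensorProduct.comm 𝕜 V K).toLinearMap))
        ((TensorProduct.tensorTensorTensorComm 𝕜 H V K K)
          ((lV v) ⊗ₜ[𝕜] (Coalgebra.comul (R := 𝕜) x)))) := by
  classical
  have hcoe : ∀ z : K, ι.toLinearMap z = ι z := fun _ => rfl
  -- abbreviations
  have hcolL : ∀ (z : K),
      ∑ i ∈ (ℛ 𝕜 z).index, Coalgebra.counit (R := 𝕜) ((ℛ 𝕜 z).left i) • (ℛ 𝕜 z).right i = z := by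
    intro z
    set rz := ℛ 𝕜 z
    have h := congrArg (TensorProduct.lid 𝕜 K) (Coalgebra.sum_counit_tmul_eq rz)
    simp only [map_sum, TensorProduct.lid_tmul, one_smul] at h
    exact h
  have hcolR : ∀ (z : K),
      ∑ i ∈ (ℛ 𝕜 z).index, Coalgebra.counit (R := 𝕜) ((ℛ 𝕜 z).right i) • (ℛ 𝕜 z).left i = z := by
    intro z
    set rz := ℛ 𝕜 z
    have h := congrArg (TensorProduct.rid 𝕜 K) (Coalgebra.sum_tmul_counit_eq rz)
    simp only [map_sum, TensorProduct.rid_tmul, one_smul] at h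
    exact h
  -- Lemma B : r (ι x * h) y = ε x * r h y
  have hB : ∀ (x : K) (h : H) (y : K),
      r (ι x * h) y = Coalgebra.counit (R := 𝕜) x * r h y := by
    intro x h y
    rw [h21]
    rw [← (ℛ 𝕜 y).eq]
    simp only [map_sum, TensorProduct.map_tmul, LinearMap.mul'_apply, h25]
    conv_rhs => rw [← hcolR y]
    simp only [map_sum, map_smul, smul_eq_mul, Finset.mul_sum]
    refine Finset.sum_congr rfl fun i _ => ?_
    ring
  -- K is commutative
  have hcommK : ∀ x y : K, x * y = y * x := by
    intro x y
    apply hι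
    have h := h24 (ι y) x
    rw [← CoalgHomClass.map_comp_comul_apply ι y, ← (ℛ 𝕜 y).eq, ← (ℛ 𝕜 x).eq] at h
    simp only [map_sum, TensorProduct.map_tmul, TensorProduct.sum_tmul,
      TensorProduct.tmul_sum, TensorProduct.tensorTensorTensorComm_tmul,
      LinearMap.comp_apply, LinearMap.coe_comp, Function.comp_apply,
      TensorProduct.lift.tmul, TensorProduct.comm_tmul, LinearMap.mul'_apply,
      TensorProduct.lid_tmul, TensorProduct.rid_tmul, LinearMap.id_coe, id_eq,
      LinearMap.id_apply, CoalgHom.coe_toLinearMap, h25] at h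
    simp only [TensorProduct.comm_tmul, TensorProduct.map_tmul, LinearMap.mul'_apply,
      LinearMap.id_coe, id_eq, h25, BialgHom.coe_toLinearMap, CoalgHom.coe_toLinearMap,
      LinearEquiv.coe_coe, hcoe] at h
    have e1 : (ι x : H) * ι y = ∑ i ∈ (ℛ 𝕜 x).index, ∑ j ∈ (ℛ 𝕜 y).index,
        (Coalgebra.counit (R := 𝕜) ((ℛ 𝕜 y).left j) * Coalgebra.counit (R := 𝕜) ((ℛ 𝕜 x).left i)) •
          (ι ((ℛ 𝕜 x).right i) * ι ((ℛ 𝕜 y).right j)) := by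
      conv_lhs => rw [← hcolL x, ← hcolL y]
      rw [map_sum, map_sum, Finset.sum_mul_sum]
      refine Finset.sum_congr rfl fun i _ => Finset.sum_congr rfl fun j _ => ?_
      rw [map_smul, map_smul, smul_mul_smul_comm, mul_comm]
    have e2 : (ι y : H) * ι x = ∑ i ∈ (ℛ 𝕜 x).index, ∑ j ∈ (ℛ 𝕜 y).index,
        (Coalgebra.counit (R := 𝕜) ((ℛ 𝕜 y).right j) * Coalgebra.counit (R := 𝕜) ((ℛ 𝕜 x).right i)) •
          (ι ((ℛ 𝕜 y).left j) * ι ((ℛ 𝕜 x).left i)) := by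
      conv_lhs => rw [← hcolR y, ← hcolR x]
      rw [map_sum, map_sum, Finset.sum_mul_sum, Finset.sum_comm]
      refine Finset.sum_congr rfl fun i _ => Finset.sum_congr rfl fun j _ => ?_
      rw [map_smul, map_smul, smul_mul_smul_comm]
    rw [map_mul, map_mul, e1, e2]
    exact h
  constructor
  · intro x y v
    obtain ⟨S, hS⟩ := TensorProduct.exists_finset (R := 𝕜) (lV v)
    have hlVax : lV (a x v) = ∑ i ∈ (ℛ 𝕜 x).index, ∑ p ∈ S,
        (ι ((ℛ 𝕜 x).left i) * p.1) ⊗ₜ[𝕜] a ((ℛ 𝕜 x).right i) p.2 := by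
      rw [hmor, ← (ℛ 𝕜 x).eq, hS]
      simp only [map_sum, TensorProduct.sum_tmul, TensorProduct.tmul_sum,
        TensorProduct.tensorTensorTensorComm_tmul, TensorProduct.map_tmul,
        LinearMap.coe_comp, Function.comp_apply, LinearMap.mul'_apply,
        TensorProduct.lift.tmul, LinearMap.id_coe, id_eq, BialgHom.coe_toLinearMap,
        LinearEquiv.coe_coe, hcoe]
      rw [Finset.sum_comm]
    have h1 : ract y (a x v) = ∑ i ∈ (ℛ 𝕜 x).index, ∑ p ∈ S, ∑ k ∈ (ℛ 𝕜 y).index,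
        (r (ι ((ℛ 𝕜 x).left i) * p.1) ((ℛ 𝕜 y).left k)) •
          a ((ℛ 𝕜 y).right k) (a ((ℛ 𝕜 x).right i) p.2) := by
      rw [hract, hlVax, ← (ℛ 𝕜 y).eq]
      simp only [map_sum, TensorProduct.sum_tmul, TensorProduct.tmul_sum,
        TensorProduct.tensorTensorTensorComm_tmul, TensorProduct.map_tmul,
        LinearMap.coe_comp, Function.comp_apply, LinearMap.mul'_apply,
        TensorProduct.lift.tmul, LinearMap.id_coe, id_eq, BialgHom.coe_toLinearMap,
        LinearEquiv.coe_coe, TensorProduct.comm_tmul, TensorProduct.lid_tmul]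
    have h2 : ract y v = ∑ p ∈ S, ∑ k ∈ (ℛ 𝕜 y).index,
        r p.1 ((ℛ 𝕜 y).left k) • a ((ℛ 𝕜 y).right k) p.2 := by
      rw [hract, hS, ← (ℛ 𝕜 y).eq]
      simp only [map_sum, TensorProduct.sum_tmul, TensorProduct.tmul_sum,
        TensorProduct.tensorTensorTensorComm_tmul, TensorProduct.map_tmul,
        LinearMap.coe_comp, Function.comp_apply, LinearMap.mul'_apply,
        TensorProduct.lift.tmul, LinearMap.id_coe, id_eq, BialgHom.coe_toLinearMap,
        LinearEquiv.coe_coe, TensorProduct.comm_tmul, TensorProduct.lid_tmul, hcoe]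
    have hax : ∀ w : V, a x w = ∑ i ∈ (ℛ 𝕜 x).index,
        Coalgebra.counit (R := 𝕜) ((ℛ 𝕜 x).left i) • a ((ℛ 𝕜 x).right i) w := by
      intro w
      conv_lhs => rw [← hcolL x]
      rw [map_sum, LinearMap.sum_apply]
      refine Finset.sum_congr rfl fun i _ => ?_
      rw [map_smul, LinearMap.smul_apply]
    have h3 : a x (ract y v) = ∑ p ∈ S, ∑ k ∈ (ℛ 𝕜 y).index,
        r p.1 ((ℛ 𝕜 y).left k) • ∑ i ∈ (ℛ 𝕜 x).index,
          Coalgebra.counit (R := 𝕜) ((ℛ 𝕜 x).left i) •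
            a ((ℛ 𝕜 x).right i) (a ((ℛ 𝕜 y).right k) p.2) := by
      rw [h2, map_sum]
      refine Finset.sum_congr rfl fun p _ => ?_
      rw [map_sum]
      refine Finset.sum_congr rfl fun k _ => ?_
      rw [map_smul, hax]
    rw [h1, h3, Finset.sum_comm]
    refine Finset.sum_congr rfl fun p _ => ?_
    rw [Finset.sum_comm]
    refine Finset.sum_congr rfl fun k _ => ?_
    rw [Finset.smul_sum]
    refine Finset.sum_congr rfl fun i _ => ?_
    rw [hB, ← hamul, hcommK, hamul, smul_smul, mul_comm]
  · intro x v
    obtain ⟨S, hS⟩ := TensorProduct.exists_finset (R := 𝕜) (lV v)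
    choose T hT using fun p : H × V => TensorProduct.exists_finset (R := 𝕜) (lV p.2)
    obtain ⟨L, hLapp⟩ : ∃ L : ((K ⊗[𝕜] (K ⊗[𝕜] K)) ⊗[𝕜] (H ⊗[𝕜] (H ⊗[𝕜] V))) →ₗ[𝕜] H ⊗[𝕜] V,
        ∀ (x1 x2 x3 : K) (h1 h2 : H) (w : V),
          L ((x1 ⊗ₜ[𝕜] (x2 ⊗ₜ[𝕜] x3)) ⊗ₜ[𝕜] (h1 ⊗ₜ[𝕜] (h2 ⊗ₜ[𝕜] w)))
            = r h1 x1 • ((ι x2 * h2) ⊗ₜ[𝕜] (a x3 w)) := by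
      refine ⟨(TensorProduct.lid 𝕜 (H ⊗[𝕜] V)).toLinearMap ∘ₗ
        TensorProduct.map ((TensorProduct.lift r) ∘ₗ (TensorProduct.comm 𝕜 K H).toLinearMap)
          (TensorProduct.map ((LinearMap.mul' 𝕜 H) ∘ₗ
              TensorProduct.map ι.toLinearMap LinearMap.id) (TensorProduct.lift a) ∘ₗ
            (TensorProduct.tensorTensorTensorComm 𝕜 K K H V).toLinearMap) ∘ₗ
        (TensorProduct.tensorTensorTensorComm 𝕜 K (K ⊗[𝕜] K) H (H ⊗[𝕜] V)).toLinearMap, ?_⟩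
      intro x1 x2 x3 h1 h2 w
      simp only [LinearMap.coe_comp, Function.comp_apply, LinearEquiv.coe_coe,
        TensorProduct.tensorTensorTensorComm_tmul, TensorProduct.map_tmul,
        TensorProduct.comm_tmul, TensorProduct.lift.tmul, LinearMap.mul'_apply,
        LinearMap.id_coe, id_eq, TensorProduct.lid_tmul, hcoe]
    obtain ⟨Rm, hRapp⟩ : ∃ Rm : ((K ⊗[𝕜] (K ⊗[𝕜] K)) ⊗[𝕜] (H ⊗[𝕜] (H ⊗[𝕜] V))) →ₗ[𝕜] H ⊗[𝕜] V,
        ∀ (x1 x2 x3 : K) (h1 h2 : H) (w : V),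
          Rm ((x1 ⊗ₜ[𝕜] (x2 ⊗ₜ[𝕜] x3)) ⊗ₜ[𝕜] (h1 ⊗ₜ[𝕜] (h2 ⊗ₜ[𝕜] w)))
            = r h2 x2 • ((h1 * ι x1) ⊗ₜ[𝕜] (a x3 w)) := by
      refine ⟨TensorProduct.map
          ((LinearMap.mul' 𝕜 H) ∘ₗ TensorProduct.map LinearMap.id ι.toLinearMap ∘ₗ
            (TensorProduct.comm 𝕜 K H).toLinearMap)
          ((TensorProduct.lid 𝕜 V).toLinearMap ∘ₗ
            TensorProduct.map ((TensorProduct.lift r) ∘ₗ (TensorProduct.comm 𝕜 K H).toLinearMap)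
              (TensorProduct.lift a) ∘ₗ
            (TensorProduct.tensorTensorTensorComm 𝕜 K K H V).toLinearMap) ∘ₗ
        (TensorProduct.tensorTensorTensorComm 𝕜 K (K ⊗[𝕜] K) H (H ⊗[𝕜] V)).toLinearMap, ?_⟩
      intro x1 x2 x3 h1 h2 w
      simp only [LinearMap.coe_comp, Function.comp_apply, LinearEquiv.coe_coe,
        TensorProduct.tensorTensorTensorComm_tmul, TensorProduct.map_tmul,
        TensorProduct.comm_tmul, TensorProduct.lift.tmul, LinearMap.mul'_apply,
        LinearMap.id_coe, id_eq, TensorProduct.lid_tmul, hcoe,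
        TensorProduct.tmul_smul]
    -- the two representations of (id ⊗ comul)(comul x)
    have hK : (∑ i ∈ (ℛ 𝕜 x).index, ∑ j ∈ (ℛ 𝕜 ((ℛ 𝕜 x).right i)).index,
          (ℛ 𝕜 x).left i ⊗ₜ[𝕜] ((ℛ 𝕜 ((ℛ 𝕜 x).right i)).left j ⊗ₜ[𝕜]
            (ℛ 𝕜 ((ℛ 𝕜 x).right i)).right j))
        = ∑ i ∈ (ℛ 𝕜 x).index, ∑ j ∈ (ℛ 𝕜 ((ℛ 𝕜 x).left i)).index,
          (ℛ 𝕜 ((ℛ 𝕜 x).left i)).left j ⊗ₜ[𝕜] ((ℛ 𝕜 ((ℛ 𝕜 x).left i)).right j ⊗ₜ[𝕜]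
            (ℛ 𝕜 x).right i) :=
      (Coalgebra.sum_tmul_tmul_eq (ℛ 𝕜 x) (fun i => ℛ 𝕜 ((ℛ 𝕜 x).left i))
        (fun i => ℛ 𝕜 ((ℛ 𝕜 x).right i))).symm
    -- the two representations of (id ⊗ lV)(lV v)
    have hV : (∑ p ∈ S, ∑ q ∈ T p, p.1 ⊗ₜ[𝕜] (q.1 ⊗ₜ[𝕜] q.2) : H ⊗[𝕜] (H ⊗[𝕜] V))
        = ∑ p ∈ S, ∑ j ∈ (ℛ 𝕜 p.1).index,
            (ℛ 𝕜 p.1).left j ⊗ₜ[𝕜] ((ℛ 𝕜 p.1).right j ⊗ₜ[𝕜] p.2) := by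
      have e1 : ∀ p : H × V, (p.1 ⊗ₜ[𝕜] lV p.2 : H ⊗[𝕜] (H ⊗[𝕜] V))
          = ∑ q ∈ T p, p.1 ⊗ₜ[𝕜] (q.1 ⊗ₜ[𝕜] q.2) := by
        intro p; rw [hT p, TensorProduct.tmul_sum]
      have e2 : ∀ p : H × V, (TensorProduct.assoc 𝕜 H H V)
            ((Coalgebra.comul (R := 𝕜) p.1) ⊗ₜ[𝕜] p.2)
          = ∑ j ∈ (ℛ 𝕜 p.1).index,
              (ℛ 𝕜 p.1).left j ⊗ₜ[𝕜] ((ℛ 𝕜 p.1).right j ⊗ₜ[𝕜] p.2) := by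
        intro p; rw [← (ℛ 𝕜 p.1).eq]
        simp only [TensorProduct.sum_tmul, map_sum, TensorProduct.assoc_tmul]
      have h := hcoassoc v
      rw [hS] at h
      simp only [map_sum, TensorProduct.map_tmul, LinearMap.id_coe, id_eq] at h
      calc (∑ p ∈ S, ∑ q ∈ T p, p.1 ⊗ₜ[𝕜] (q.1 ⊗ₜ[𝕜] q.2) : H ⊗[𝕜] (H ⊗[𝕜] V))
          = ∑ p ∈ S, p.1 ⊗ₜ[𝕜] lV p.2 := Finset.sum_congr rfl fun p _ => (e1 p).symm
        _ = ∑ p ∈ S, (TensorProduct.assoc 𝕜 H H V)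
              ((Coalgebra.comul (R := 𝕜) p.1) ⊗ₜ[𝕜] p.2) := h.symm
        _ = _ := Finset.sum_congr rfl fun p _ => e2 p
    -- step A : LHS equals L applied to representation 1
    have hA : lV (ract x v)
        = L ((∑ i ∈ (ℛ 𝕜 x).index, ∑ j ∈ (ℛ 𝕜 ((ℛ 𝕜 x).right i)).index,
            (ℛ 𝕜 x).left i ⊗ₜ[𝕜] ((ℛ 𝕜 ((ℛ 𝕜 x).right i)).left j ⊗ₜ[𝕜]
              (ℛ 𝕜 ((ℛ 𝕜 x).right i)).right j)) ⊗ₜ[𝕜]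
          (∑ p ∈ S, ∑ q ∈ T p, p.1 ⊗ₜ[𝕜] (q.1 ⊗ₜ[𝕜] q.2))) := by
      have hmorA : ∀ (z : K) (p : H × V), lV (a z p.2)
          = ∑ j ∈ (ℛ 𝕜 z).index, ∑ q ∈ T p,
              (ι ((ℛ 𝕜 z).left j) * q.1) ⊗ₜ[𝕜] a ((ℛ 𝕜 z).right j) q.2 := by
        intro z p
        rw [hmor, ← (ℛ 𝕜 z).eq, hT p]
        simp only [map_sum, TensorProduct.sum_tmul, TensorProduct.tmul_sum,
        TensorProduct.tensorTensorTensorComm_tmul, TensorProduct.map_tmul,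
        LinearMap.coe_comp, Function.comp_apply, LinearMap.mul'_apply,
        TensorProduct.lift.tmul, LinearMap.id_coe, id_eq, BialgHom.coe_toLinearMap,
        LinearEquiv.coe_coe, TensorProduct.comm_tmul, TensorProduct.lid_tmul, hcoe, map_smul]
        rw [Finset.sum_comm]
      rw [hract, hS, ← (ℛ 𝕜 x).eq]
      simp only [map_sum, TensorProduct.sum_tmul, TensorProduct.tmul_sum,
        TensorProduct.tensorTensorTensorComm_tmul, TensorProduct.map_tmul,
        LinearMap.coe_comp, Function.comp_apply, LinearMap.mul'_apply,
        TensorProduct.lift.tmul, LinearMap.id_coe, id_eq, BialgHom.coe_toLinearMap,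
        LinearEquiv.coe_coe, TensorProduct.comm_tmul, TensorProduct.lid_tmul, hcoe, map_smul]
      simp only [hmorA, Finset.smul_sum]
      conv_rhs => simp only [TensorProduct.sum_tmul, TensorProduct.tmul_sum, map_sum, hLapp]
      exact Finset.sum_congr rfl fun p _ =>
        (Finset.sum_congr rfl fun i _ => Finset.sum_comm).trans Finset.sum_comm
    -- step B : RHS equals Rm applied to representation 1
    have hB2 : (TensorProduct.map
          ((LinearMap.mul' 𝕜 H) ∘ₗ (TensorProduct.map LinearMap.id ι.toLinearMap))
          ((TensorProduct.lift ract) ∘ₗ (TensorProduct.comm 𝕜 V K).toLinearMap))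
        ((TensorProduct.tensorTensorTensorComm 𝕜 H V K K)
          ((lV v) ⊗ₜ[𝕜] (Coalgebra.comul (R := 𝕜) x)))
        = Rm ((∑ i ∈ (ℛ 𝕜 x).index, ∑ j ∈ (ℛ 𝕜 ((ℛ 𝕜 x).right i)).index,
            (ℛ 𝕜 x).left i ⊗ₜ[𝕜] ((ℛ 𝕜 ((ℛ 𝕜 x).right i)).left j ⊗ₜ[𝕜]
              (ℛ 𝕜 ((ℛ 𝕜 x).right i)).right j)) ⊗ₜ[𝕜]
          (∑ p ∈ S, ∑ q ∈ T p, p.1 ⊗ₜ[𝕜] (q.1 ⊗ₜ[𝕜] q.2))) := by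
      have ractA : ∀ (z : K) (p : H × V), ract z p.2
          = ∑ q ∈ T p, ∑ j ∈ (ℛ 𝕜 z).index,
              r q.1 ((ℛ 𝕜 z).left j) • a ((ℛ 𝕜 z).right j) q.2 := by
        intro z p
        rw [hract, hT p, ← (ℛ 𝕜 z).eq]
        simp only [map_sum, TensorProduct.sum_tmul, TensorProduct.tmul_sum,
        TensorProduct.tensorTensorTensorComm_tmul, TensorProduct.map_tmul,
        LinearMap.coe_comp, Function.comp_apply, LinearMap.mul'_apply,
        TensorProduct.lift.tmul, LinearMap.id_coe, id_eq, BialgHom.coe_toLinearMap,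
        LinearEquiv.coe_coe, TensorProduct.comm_tmul, TensorProduct.lid_tmul, hcoe, map_smul]
      rw [hS, ← (ℛ 𝕜 x).eq]
      simp only [map_sum, TensorProduct.sum_tmul, TensorProduct.tmul_sum,
        TensorProduct.tensorTensorTensorComm_tmul, TensorProduct.map_tmul,
        LinearMap.coe_comp, Function.comp_apply, LinearMap.mul'_apply,
        TensorProduct.lift.tmul, LinearMap.id_coe, id_eq, BialgHom.coe_toLinearMap,
        LinearEquiv.coe_coe, TensorProduct.comm_tmul, TensorProduct.lid_tmul, hcoe, map_smul]
      simp only [ractA, TensorProduct.tmul_sum, TensorProduct.tmul_smul]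
      conv_rhs => simp only [TensorProduct.sum_tmul, TensorProduct.tmul_sum, map_sum, hRapp]
      exact Finset.sum_comm.trans (Finset.sum_congr rfl fun p _ => Finset.sum_comm)
    -- step C : L = Rm on representation 2
    have hC : L ((∑ i ∈ (ℛ 𝕜 x).index, ∑ j ∈ (ℛ 𝕜 ((ℛ 𝕜 x).left i)).index,
            (ℛ 𝕜 ((ℛ 𝕜 x).left i)).left j ⊗ₜ[𝕜] ((ℛ 𝕜 ((ℛ 𝕜 x).left i)).right j ⊗ₜ[𝕜]
              (ℛ 𝕜 x).right i)) ⊗ₜ[𝕜]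
          (∑ p ∈ S, ∑ j ∈ (ℛ 𝕜 p.1).index,
            (ℛ 𝕜 p.1).left j ⊗ₜ[𝕜] ((ℛ 𝕜 p.1).right j ⊗ₜ[𝕜] p.2)))
        = Rm ((∑ i ∈ (ℛ 𝕜 x).index, ∑ j ∈ (ℛ 𝕜 ((ℛ 𝕜 x).left i)).index,
            (ℛ 𝕜 ((ℛ 𝕜 x).left i)).left j ⊗ₜ[𝕜] ((ℛ 𝕜 ((ℛ 𝕜 x).left i)).right j ⊗ₜ[𝕜]
              (ℛ 𝕜 x).right i)) ⊗ₜ[𝕜]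
          (∑ p ∈ S, ∑ j ∈ (ℛ 𝕜 p.1).index,
            (ℛ 𝕜 p.1).left j ⊗ₜ[𝕜] ((ℛ 𝕜 p.1).right j ⊗ₜ[𝕜] p.2))) := by
      simp only [TensorProduct.sum_tmul, TensorProduct.tmul_sum, map_sum, hLapp, hRapp]
      refine Finset.sum_congr rfl fun p _ => ?_
      refine Finset.sum_comm.trans (Eq.trans ?_ Finset.sum_comm)
      refine Finset.sum_congr rfl fun i _ => ?_
      have h := h24 p.1 ((ℛ 𝕜 x).left i)
      rw [← (ℛ 𝕜 p.1).eq, ← (ℛ 𝕜 ((ℛ 𝕜 x).left i)).eq] at h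
      simp only [map_sum, TensorProduct.sum_tmul, TensorProduct.tmul_sum,
        TensorProduct.tensorTensorTensorComm_tmul, TensorProduct.map_tmul,
        LinearMap.coe_comp, Function.comp_apply, LinearMap.mul'_apply,
        TensorProduct.lift.tmul, LinearMap.id_coe, id_eq, BialgHom.coe_toLinearMap,
        LinearEquiv.coe_coe, TensorProduct.comm_tmul, TensorProduct.lid_tmul, hcoe, map_smul,
        TensorProduct.rid_tmul, CoalgHom.coe_toLinearMap, LinearMap.id_apply] at h
      have h2 := congrArg (fun z : H => z ⊗ₜ[𝕜] (a ((ℛ 𝕜 x).right i) p.2)) h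
      simp only [TensorProduct.sum_tmul, TensorProduct.smul_tmul'] at h2
      exact Finset.sum_comm.trans (h2.trans Finset.sum_comm)
    rw [hA, hB2, hK, hV, hC]
end

section
/- In the setting of the previous statement, if additionally r : Γ × G → k* is a bicharacter trivial on G × G, then ω : (Γ/G)³ → k* defined by ω(u, v, w) := r(ũ, θ(v, w)) (where ũ ∈ Q is the representative of u) is a 3-cocycle on the group Γ/G with values in k* (trivial action), i.e. ω(v,w,x) ω(u, vw, x) ω(u, v, w) = ω(uv, w, x) ω(u, v, wx). -/
/-- with a bicharacter r : Γ × G → k* trivial on G × G, the map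
ω(u,v,w) := r(ũ, θ(v,w)) is a 3-cocycle on Γ/G ≅ Q with values in k* (trivial action). -/
theorem transversal_three_cocycle
    {𝕜 : Type*} [Field 𝕜]
    {Γ : Type*} [Group Γ] (G : Subgroup Γ) (hGcentral : G ≤ Subgroup.center Γ)
    (Q : Set Γ) (hQ1 : (1 : Γ) ∈ Q)
    (hfact : ∀ γ : Γ, ∃ g : G, ∃ q : Q, γ = (g : Γ) * q)
    (huniq : ∀ (g g' : G) (q q' : Q), (g : Γ) * q = (g' : Γ) * q' → g = g' ∧ q = q')
    (dot : Q → Q → Q) (θ : Q → Q → G)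
    (hθ : ∀ p q : Q, (p : Γ) * q = (θ p q : Γ) * (dot p q : Γ))
    -- the bicharacter, trivial on G × G
    (r : Γ → G → 𝕜ˣ)
    (hbi1 : ∀ (γ γ' : Γ) (g : G), r (γ * γ') g = r γ g * r γ' g)
    (hbi2 : ∀ (γ : Γ) (g g' : G), r γ (g * g') = r γ g * r γ g')
    (htriv : ∀ g g' : G, r (g : Γ) g' = 1)
    -- ω(u, v, w) = r(ũ, θ(v, w))
    (ω : Q → Q → Q → 𝕜ˣ)
    (hω : ∀ u v w : Q, ω u v w = r (u : Γ) (θ v w)) :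
    -- 3-cocycle identity
    ∀ u v w x : Q,
      ω v w x * ω u (dot v w) x * ω u v w = ω (dot u v) w x * ω u v (dot w x) := by
  intro u v w x
  -- θ satisfies the 2-cocycle identity
  have hcoc : ∀ v w x : Q, θ v w * θ (dot v w) x = θ w x * θ v (dot w x) := by
    intro v w x
    have h1 : ((v : Γ) * w) * x = ((θ v w * θ (dot v w) x : G) : Γ) * (dot (dot v w) x : Γ) := by
      rw [hθ v w, mul_assoc, hθ (dot v w) x]
      push_cast
      group
    have h2 : (v : Γ) * ((w : Γ) * x) = ((θ w x * θ v (dot w x) : G) : Γ) * (dot v (dot w x) : Γ) := by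
      rw [hθ w x]
      have hc : (v : Γ) * ((θ w x : Γ) * (dot w x : Γ)) = (θ w x : Γ) * ((v : Γ) * (dot w x : Γ)) := by
        have := (Subgroup.mem_center_iff.mp (hGcentral (θ w x).2)) (v : Γ)
        rw [← mul_assoc, this, mul_assoc]
      rw [hc, hθ v (dot w x)]
      push_cast
      group
    have := huniq _ _ _ _ (h1.symm.trans (by rw [mul_assoc] at h1 ⊢; exact h2))
    exact this.1
  -- r (dot u v) g = r u g * r v g
  have hdot : ∀ g : G, r ((dot u v : Q) : Γ) g = r (u : Γ) g * r (v : Γ) g := by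
    intro g
    have h1 : r ((θ u v : Γ) * (dot u v : Γ)) g = r (u : Γ) g * r (v : Γ) g := by
      rw [← hθ u v, hbi1]
    rw [hbi1, htriv] at h1
    rw [← one_mul (r ((dot u v : Q) : Γ) g), h1]
  have key : r (u : Γ) (θ v w) * r (u : Γ) (θ (dot v w) x)
      = r (u : Γ) (θ w x) * r (u : Γ) (θ v (dot w x)) := by
    rw [← hbi2, ← hbi2, hcoc]
  simp only [hω, hdot]
  calc r (v : Γ) (θ w x) * r (u : Γ) (θ (dot v w) x) * r (u : Γ) (θ v w)
      = r (v : Γ) (θ w x) * (r (u : Γ) (θ v w) * r (u : Γ) (θ (dot v w) x)) := by rw [mul_assoc, mul_comm (r (u:Γ) (θ (dot v w) x))]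
    _ = r (v : Γ) (θ w x) * (r (u : Γ) (θ w x) * r (u : Γ) (θ v (dot w x))) := by rw [key]
    _ = r (u : Γ) (θ w x) * r (v : Γ) (θ w x) * r (u : Γ) (θ v (dot w x)) := by rw [← mul_assoc, mul_comm (r (v:Γ) (θ w x))]
end

section
/- Let H = ⊕_{n≥0} H_n be a coradically graded pointed Hopf algebra with H_0 = kΓ for a finite group Γ, generated by Γ and skew-primitive elements x_1, …, x_θ with Δ(x_i) = x_i ⊗ g_i + 1 ⊗ x_i, g_i ∈ Γ, g_i ≠ 1. Suppose (K, r) is a braided central Hopf subalgebra of H with K ⊆ H_0. Then K = kG for a central subgroup G ⊆ Z(Γ), there is a group homomorphism Φ : G → Hom(Γ, k*) with r(γ, g) = ⟨γ, Φ(g)⟩ for γ ∈ Γ, g ∈ G, satisfying ⟨g', Φ(g)⟩ = 1 and g x_i g⁻¹ = ⟨g_i, Φ(g)⟩ x_i for all g, g' ∈ G and 1 ≤ i ≤ θ; moreover r vanishes on H_n ⊗ K for all n ≥ 1. -/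
/-!
Since `K ⊆ kΓ` is a subcoalgebra, applying a coordinate functional of the basis `Γ` to
`Δ(∑ c_γ γ) = ∑ c_γ γ ⊗ γ` shows that `K` is spanned by the grouplikes it contains; these form a
subgroup `G` because `K` is stable under the antipode. For a grouplike `y ∈ K`, axiom (2.1) makes
`r(-, y)` a character of `H`, which gives `Φ`, and (2.2) makes `Φ` multiplicative. Axiom (2.4)
evaluated on a grouplike `γ` reads `r(γ, y) yγ = r(γ, y) γy`, so `G` is central; evaluated on a
skew-primitive `x_i` its degree-zero part forces `r(x_i, y) = 0` (because `g_i ≠ 1`) and its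
degree-one part is the commutation rule. Finally the character `r(-, y)` kills the generators
`x_i`, so it factors through the projection `H → H₀` and vanishes in positive degrees.
-/

open TensorProduct Coalgebra

theorem LinearIndependent.exists_dual_apply {K V ι : Type*} [Field K] [AddCommGroup V]
    [Module K V] [DecidableEq ι] {v : ι → V} (hv : LinearIndependent K v) (i : ι) :
    ∃ φ : V →ₗ[K] K, ∀ j, φ (v j) = if j = i then 1 else 0 := by
  obtain ⟨φ, hφ⟩ := LinearMap.exists_extend (Finsupp.lapply i ∘ₗ hv.repr)
  refine ⟨φ, fun j => ?_⟩
  have := LinearMap.congr_fun hφ ⟨v j, Submodule.subset_span ⟨j, rfl⟩⟩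
  simpa [hv.repr_eq_single j, Finsupp.single_apply] using this

theorem LinearIndependent.mem_range_of_map_map_eq_sum {K V W ι : Type*} [Field K]
    [AddCommGroup V] [Module K V] [AddCommGroup W] [Module K W] {v : ι → V}
    (hv : LinearIndependent K v) (f : W →ₗ[K] V) {z : W ⊗[K] W} {c : ι →₀ K}
    (hz : TensorProduct.map f f z = c.sum fun i a => a • v i ⊗ₜ[K] v i) {i : ι} (hi : c i ≠ 0) :
    v i ∈ LinearMap.range f := by
  classical
  obtain ⟨φ, hφ⟩ := hv.exists_dual_apply i
  have hnat : ∀ w, TensorProduct.lid K V (TensorProduct.map φ .id (TensorProduct.map f f w))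
      = f (TensorProduct.lid K W (TensorProduct.map (φ ∘ₗ f) .id w)) := fun w => by
    induction w using TensorProduct.induction_on with
    | zero => simp
    | tmul a b => simp
    | add a b ha hb => simp_all
  have key : c i • v i = f (TensorProduct.lid K W (TensorProduct.map (φ ∘ₗ f) .id z)) := by
    rw [← hnat, hz, map_finsuppSum, map_finsuppSum]
    simp +contextual [hφ]
  simpa [hi] using Submodule.smul_mem _ (c i)⁻¹ (LinearMap.mem_range.mpr ⟨_, key.symm⟩)

theorem Disjoint.eq_and_eq_of_add_eq_add {R M : Type*} [Ring R] [AddCommGroup M] [Module R M]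
    {p q : Submodule R M} (hpq : Disjoint p q) {a b c d : M} (ha : a ∈ p) (hb : b ∈ q)
    (hc : c ∈ p) (hd : d ∈ q) (h : a + b = c + d) : a = c ∧ b = d := by
  have hac : a - c = d - b := sub_eq_sub_iff_add_eq_add.mpr (by rw [h, add_comm])
  have h0 : a - c = 0 :=
    Submodule.disjoint_def.mp hpq _ (sub_mem ha hc) (hac ▸ sub_mem hd hb)
  exact ⟨sub_eq_zero.mp h0, (sub_eq_zero.mp (hac ▸ h0)).symm⟩

theorem Submodule.span_preimage_eq_top_of_range_eq_span {R M N : Type*} [Semiring R]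
    [AddCommMonoid M] [Module R M] [AddCommMonoid N] [Module R N] {f : M →ₗ[R] N}
    (hf : Function.Injective f) {s : Set N} (hs : LinearMap.range f = span R s) :
    span R (f ⁻¹' s) = ⊤ := by
  have hsf : s ⊆ Set.range f := fun x hx => LinearMap.mem_range.mp (hs ▸ subset_span hx)
  apply map_injective_of_injective hf
  rw [map_span, Set.image_preimage_eq_of_subset hsf, ← hs, map_top]

theorem IsGroupLikeElem.of_map_of_injective {𝕜 A B F : Type*} [Field 𝕜] [AddCommGroup A]
    [Module 𝕜 A] [Coalgebra 𝕜 A] [AddCommGroup B] [Module 𝕜 B] [Coalgebra 𝕜 B]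
    [FunLike F A B] [CoalgHomClass F 𝕜 A B] (f : F) (hf : Function.Injective f) {a : A}
    (ha : IsGroupLikeElem 𝕜 (f a)) : IsGroupLikeElem 𝕜 a where
  counit_eq_one := by rw [← CoalgHomClass.counit_comp_apply f, ha.counit_eq_one]
  comul_eq_tmul_self := by
    apply TensorProduct.map_injective_of_flat_flat (f : A →ₗ[𝕜] B) (f : A →ₗ[𝕜] B) hf hf
    rw [CoalgHomClass.map_comp_comul_apply, ha.comul_eq_tmul_self, map_tmul]
    rfl

theorem CoalgHom.range_eq_span_image_of_le_span {𝕜 C D Γ : Type*} [Field 𝕜]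
    [AddCommGroup C] [Module 𝕜 C] [CoalgebraStruct 𝕜 C]
    [AddCommGroup D] [Module 𝕜 D] [CoalgebraStruct 𝕜 D] (f : C →ₗc[𝕜] D) {v : Γ → D}
    (hv : LinearIndependent 𝕜 v) (hv_comul : ∀ γ, comul (R := 𝕜) (v γ) = v γ ⊗ₜ[𝕜] v γ)
    (hf : LinearMap.range f.toLinearMap ≤ Submodule.span 𝕜 (Set.range v)) :
    LinearMap.range f.toLinearMap
      = Submodule.span 𝕜 (v '' {γ | v γ ∈ LinearMap.range f.toLinearMap}) := by
  refine le_antisymm ?_ (Submodule.span_le.mpr ?_)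
  · rintro _ ⟨y, rfl⟩
    obtain ⟨c, hc⟩ := Finsupp.mem_span_range_iff_exists_finsupp.mp (hf ⟨y, rfl⟩)
    have hcomul : TensorProduct.map f.toLinearMap f.toLinearMap (comul y)
        = c.sum fun γ a => a • v γ ⊗ₜ[𝕜] v γ := by
      rw [← LinearMap.comp_apply, f.map_comp_comul, LinearMap.comp_apply, ← hc, map_finsuppSum]
      simp [hv_comul]
    rw [← hc]
    exact Submodule.finsuppSum_mem _ _ _ _ fun γ hγ => Submodule.smul_mem _ _
      (Submodule.subset_span ⟨γ, hv.mem_range_of_map_map_eq_sum _ hcomul hγ, rfl⟩)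
  · rintro _ ⟨γ, hγ, rfl⟩
    exact hγ

section Graded

variable {R A ι : Type*} [CommSemiring R] [Semiring A] [Algebra R A]
  [DecidableEq ι] [AddCommMonoid ι] [PartialOrder ι] [CanonicallyOrderedAdd ι]
  (𝒜 : ι → Submodule R A) [GradedAlgebra 𝒜]

@[simps!]
def GradedAlgebra.projZeroAlgHom : A →ₐ[R] A :=
  AlgHom.ofLinearMap (GradedAlgebra.proj 𝒜 0) (GradedRing.projZeroRingHom 𝒜).map_one
    (GradedRing.projZeroRingHom 𝒜).map_mul

theorem AlgHom.eq_zero_of_mem_of_ne_zero {B : Type*} [Semiring B] [Algebra R B]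
    (χ : A →ₐ[R] B) {s : Set A} (hs : Algebra.adjoin R s = ⊤)
    (hχs : ∀ a ∈ s, ∃ i, a ∈ 𝒜 i ∧ (i ≠ 0 → χ a = 0)) {i : ι} (hi : i ≠ 0) {a : A}
    (ha : a ∈ 𝒜 i) : χ a = 0 := by
  have hproj : χ = χ.comp (GradedAlgebra.projZeroAlgHom 𝒜) := by
    refine AlgHom.ext_of_adjoin_eq_top hs fun b hb => ?_
    obtain ⟨j, hbj, hχb⟩ := hχs b hb
    by_cases hj : j = 0
    · subst hj
      simp [DirectSum.decompose_of_mem_same 𝒜 hbj]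
    · simp [DirectSum.decompose_of_mem_ne 𝒜 hbj hj, hχb hj]
  rw [hproj]
  simp [DirectSum.decompose_of_mem_ne 𝒜 ha hi]

end Graded

section Pairing

variable {𝕜 H K : Type*} [CommSemiring 𝕜] [Semiring H] [Bialgebra 𝕜 H] [Semiring K]
  [Bialgebra 𝕜 K]

/-- Axiom (2.1): `r(h h', k) = r(h', k₁) r(h, k₂)`. -/
def PairingMulLeft (r : H →ₗ[𝕜] K →ₗ[𝕜] 𝕜) : Prop :=
  ∀ (h h' : H) (x : K), r (h * h') x
    = LinearMap.mul' 𝕜 𝕜 (TensorProduct.map (r h') (r h) (comul (R := 𝕜) x))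

/-- Axiom (2.2): `r(h, k k') = r(h₁, k) r(h₂, k')`. -/
def PairingMulRight (r : H →ₗ[𝕜] K →ₗ[𝕜] 𝕜) : Prop :=
  ∀ (h : H) (x y : K), r h (x * y)
    = LinearMap.mul' 𝕜 𝕜 (TensorProduct.map (r.flip x) (r.flip y) (comul (R := 𝕜) h))

/-- Axiom (2.4): `r(h₁, k₁) k₂ h₂ = h₁ k₁ r(h₂, k₂)`. -/
def PairingCommutes (r : H →ₗ[𝕜] K →ₗ[𝕜] 𝕜) (ι : K →ₗ[𝕜] H) : Prop :=
  ∀ (h : H) (x : K),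
    (TensorProduct.lid 𝕜 H) (TensorProduct.map (TensorProduct.lift r)
        ((LinearMap.mul' 𝕜 H) ∘ₗ (TensorProduct.map ι LinearMap.id)
          ∘ₗ (TensorProduct.comm 𝕜 H K).toLinearMap)
        ((TensorProduct.tensorTensorTensorComm 𝕜 H H K K) (comul h ⊗ₜ[𝕜] comul x)))
      = (TensorProduct.rid 𝕜 H) (TensorProduct.map
          ((LinearMap.mul' 𝕜 H) ∘ₗ (TensorProduct.map LinearMap.id ι)) (TensorProduct.lift r)
          ((TensorProduct.tensorTensorTensorComm 𝕜 H H K K) (comul h ⊗ₜ[𝕜] comul x)))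

variable {r : H →ₗ[𝕜] K →ₗ[𝕜] 𝕜}

theorem PairingMulLeft.apply_mul (h21 : PairingMulLeft r) {y : K}
    (hy : comul (R := 𝕜) y = y ⊗ₜ[𝕜] y) (h h' : H) : r (h * h') y = r h y * r h' y := by
  rw [h21, hy, map_tmul, LinearMap.mul'_apply, mul_comm]

theorem PairingMulRight.apply_mul (h22 : PairingMulRight r) {h : H}
    (hh : comul (R := 𝕜) h = h ⊗ₜ[𝕜] h) (x y : K) : r h (x * y) = r h x * r h y := by
  rw [h22, hh, map_tmul, LinearMap.mul'_apply, LinearMap.flip_apply, LinearMap.flip_apply]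

def PairingMulLeft.character (h21 : PairingMulLeft r)
    (h23b : ∀ x : K, r 1 x = counit (R := 𝕜) x) {y : K} (hy : IsGroupLikeElem 𝕜 y) : H →ₐ[𝕜] 𝕜 :=
  AlgHom.ofLinearMap (r.flip y) (by simp [h23b, hy.counit_eq_one])
    (h21.apply_mul hy.comul_eq_tmul_self)

@[simp]
theorem PairingMulLeft.character_apply (h21 : PairingMulLeft r)
    (h23b : ∀ x : K, r 1 x = counit (R := 𝕜) x) {y : K} (hy : IsGroupLikeElem 𝕜 y) (h : H) :
    h21.character h23b hy h = r h y := rfl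

noncomputable def PairingMulLeft.characterHom {Γ : Type*} [Group Γ] (h21 : PairingMulLeft r)
    (h22 : PairingMulRight r) (h23b : ∀ x : K, r 1 x = counit (R := 𝕜) x) (gl : Γ →* H)
    (hgl : ∀ γ, comul (R := 𝕜) (gl γ) = gl γ ⊗ₜ[𝕜] gl γ) : GroupLike 𝕜 K →* (Γ →* 𝕜ˣ) :=
  MonoidHom.mk' (fun y => ((h21.character h23b y.2 : H →* 𝕜).comp gl).toHomUnits)
    fun y y' => by
      ext γ
      simp [h22.apply_mul (hgl γ)]

variable {ι : K →ₗ[𝕜] H}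

theorem PairingCommutes.smul_mul_comm (h24 : PairingCommutes r ι) {h : H} {y : K}
    (hh : comul (R := 𝕜) h = h ⊗ₜ[𝕜] h) (hy : comul (R := 𝕜) y = y ⊗ₜ[𝕜] y) :
    r h y • (ι y * h) = r h y • (h * ι y) := by
  simpa [hh, hy] using h24 h y

theorem PairingCommutes.eq_of_skewPrimitive (h24 : PairingCommutes r ι) {x a : H} {y : K}
    (hx : comul (R := 𝕜) x = x ⊗ₜ[𝕜] a + 1 ⊗ₜ[𝕜] x) (hy : comul (R := 𝕜) y = y ⊗ₜ[𝕜] y) :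
    r x y • (ι y * a) + r 1 y • (ι y * x) = r a y • (x * ι y) + r x y • ι y := by
  simpa [hx, hy, add_tmul] using h24 x y

end Pairing

section PairingOverField

variable {𝕜 H K : Type*} [Field 𝕜] [Ring H] [Bialgebra 𝕜 H] [Semiring K] [Bialgebra 𝕜 K]
  {r : H →ₗ[𝕜] K →ₗ[𝕜] 𝕜} {ι : K →ₗ[𝕜] H}

theorem PairingCommutes.mul_comm_of_isUnit (h24 : PairingCommutes r ι) (h21 : PairingMulLeft r)
    (h23b : ∀ x : K, r 1 x = counit (R := 𝕜) x) {h : H} (hh : comul (R := 𝕜) h = h ⊗ₜ[𝕜] h)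
    (hu : IsUnit h) {y : K} (hy : IsGroupLikeElem 𝕜 y) : ι y * h = h * ι y :=
  smul_right_injective H (hu.map (h21.character h23b hy)).ne_zero
    (h24.smul_mul_comm hh hy.comul_eq_tmul_self)

theorem PairingCommutes.eq_zero_and_mul_eq_of_skewPrimitive (h24 : PairingCommutes r ι)
    (h23b : ∀ x : K, r 1 x = counit (R := 𝕜) x) (𝒜 : ℕ → Submodule 𝕜 H) [GradedAlgebra 𝒜]
    {x a : H} (hx : comul (R := 𝕜) x = x ⊗ₜ[𝕜] a + 1 ⊗ₜ[𝕜] x) (hx1 : x ∈ 𝒜 1) (ha0 : a ∈ 𝒜 0)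
    {y : K} (hy : IsGroupLikeElem 𝕜 y) (hy0 : ι y ∈ 𝒜 0) (hne : ι y * a ≠ ι y) :
    r x y = 0 ∧ ι y * x = r a y • (x * ι y) := by
  have h := h24.eq_of_skewPrimitive hx hy.comul_eq_tmul_self
  rw [h23b, hy.counit_eq_one, one_smul, add_comm (r a y • _)] at h
  have h01 : Disjoint (𝒜 0) (𝒜 1) :=
    (DirectSum.Decomposition.isInternal 𝒜).submodule_iSupIndep.pairwiseDisjoint zero_ne_one
  obtain ⟨h0, h1⟩ := h01.eq_and_eq_of_add_eq_add
    (Submodule.smul_mem _ _ (by simpa using SetLike.GradedMul.mul_mem hy0 ha0))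
    (by simpa using SetLike.GradedMul.mul_mem hy0 hx1) (Submodule.smul_mem _ _ hy0)
    (Submodule.smul_mem _ _ (by simpa using SetLike.GradedMul.mul_mem hx1 hy0)) h
  exact ⟨by_contra fun hr => hne (smul_right_injective H hr h0), h1⟩

end PairingOverField

section GrouplikeSubgroup

variable {𝕜 H K Γ : Type*} [Field 𝕜] [Ring H] [Bialgebra 𝕜 H] [Ring K] [HopfAlgebra 𝕜 K]
  [Group Γ] {gl : Γ →* H} {hgl : ∀ γ, IsGroupLikeElem 𝕜 (gl γ)} {ι : K →ₐc[𝕜] H}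
  {hι : Function.Injective ι}

variable (gl hgl ι hι) in
def grouplikeSubgroup : Subgroup Γ where
  carrier := {γ | gl γ ∈ LinearMap.range ι.toLinearMap}
  one_mem' := ⟨1, show ι 1 = gl 1 by simp⟩
  mul_mem' := by
    rintro a b ⟨y, hy : ι y = gl a⟩ ⟨y', hy' : ι y' = gl b⟩
    exact ⟨y * y', show ι (y * y') = gl (a * b) by rw [map_mul, map_mul, hy, hy']⟩
  inv_mem' := by
    rintro γ ⟨y, hy : ι y = gl γ⟩
    have hgy : IsGroupLikeElem 𝕜 y := .of_map_of_injective ι hι (hy ▸ hgl γ)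
    refine ⟨HopfAlgebra.antipode 𝕜 y, show ι (HopfAlgebra.antipode 𝕜 y) = gl γ⁻¹ from ?_⟩
    calc ι (HopfAlgebra.antipode 𝕜 y) = ι (HopfAlgebra.antipode 𝕜 y) * (gl γ * gl γ⁻¹) := by
          rw [← map_mul, mul_inv_cancel, map_one, mul_one]
      _ = gl γ⁻¹ := by
          rw [← hy, ← mul_assoc, ← map_mul, hgy.antipode_mul_cancel, map_one, one_mul]

theorem mem_grouplikeSubgroup {γ : Γ} :
    γ ∈ grouplikeSubgroup gl hgl ι hι ↔ ∃ y : GroupLike 𝕜 K, ι y = gl γ := by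
  refine ⟨fun ⟨y, (hy : ι y = gl γ)⟩ => ?_, fun ⟨y, hy⟩ => ⟨y, hy⟩⟩
  exact ⟨⟨y, .of_map_of_injective ι hι (hy ▸ hgl γ)⟩, hy⟩

noncomputable def grouplikeSubgroup.toGroupLike :
    grouplikeSubgroup gl hgl ι hι →* GroupLike 𝕜 K :=
  MonoidHom.mk' (fun g => (mem_grouplikeSubgroup.mp g.2).choose) fun g g' => by
    have hspec (g : grouplikeSubgroup gl hgl ι hι) := (mem_grouplikeSubgroup.mp g.2).choose_spec
    exact GroupLike.ext <| hι <| by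
      rw [GroupLike.val_mul, map_mul, hspec, hspec, hspec, Subgroup.coe_mul, map_mul]

theorem grouplikeSubgroup.map_toGroupLike (g : grouplikeSubgroup gl hgl ι hι) :
    ι (toGroupLike g : K) = gl g :=
  (mem_grouplikeSubgroup.mp g.2).choose_spec

theorem grouplikeSubgroup_le_center {r : H →ₗ[𝕜] K →ₗ[𝕜] 𝕜}
    (h24 : PairingCommutes r ι.toLinearMap) (h21 : PairingMulLeft r)
    (h23b : ∀ x : K, r 1 x = counit (R := 𝕜) x) (hgl_inj : Function.Injective gl) :
    grouplikeSubgroup gl hgl ι hι ≤ Subgroup.center Γ := by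
  intro g hg
  obtain ⟨y, hy⟩ := mem_grouplikeSubgroup.mp hg
  refine Subgroup.mem_center_iff.mpr fun γ => hgl_inj ?_
  rw [map_mul, map_mul, ← hy]
  exact (h24.mul_comm_of_isUnit h21 h23b (hgl γ).comul_eq_tmul_self ((Group.isUnit γ).map gl)
    y.2).symm

end GrouplikeSubgroup

theorem braided_central_of_pointed_gives_pair_general
    {𝕜 H K : Type*} [Field 𝕜]
    [Ring H] [HopfAlgebra 𝕜 H]
    [Ring K] [HopfAlgebra 𝕜 K]
    {Γ : Type*} [Group Γ]
    -- the grading of H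
    (𝒜 : ℕ → Submodule 𝕜 H)
    (hinternal : DirectSum.IsInternal 𝒜)
    (hmul : ∀ {m n : ℕ} {a b : H}, a ∈ 𝒜 m → b ∈ 𝒜 n → a * b ∈ 𝒜 (m + n))
    (h1mem : (1 : H) ∈ 𝒜 0)
    -- H₀ = kΓ
    (gl : Γ →* H)
    (hgl_comul : ∀ γ : Γ, Coalgebra.comul (R := 𝕜) (gl γ) = gl γ ⊗ₜ[𝕜] gl γ)
    (hgl_counit : ∀ γ : Γ, Coalgebra.counit (R := 𝕜) (gl γ) = 1)
    (hgl_li : LinearIndependent 𝕜 (fun γ : Γ => gl γ))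
    (hgl_span : Submodule.span 𝕜 (Set.range gl) = 𝒜 0)
    -- the skew primitive generators x₁, ..., x_θ in degree one
    {θ : ℕ} (x : Fin θ → H) (gvec : Fin θ → Γ)
    (hx_mem : ∀ i, x i ∈ 𝒜 1)
    (hx_comul : ∀ i, Coalgebra.comul (R := 𝕜) (x i)
      = x i ⊗ₜ[𝕜] gl (gvec i) + (1 : H) ⊗ₜ[𝕜] x i)
    (hgvec_ne : ∀ i, gvec i ≠ 1)
    (hgen : Algebra.adjoin 𝕜 (Set.range gl ∪ Set.range x) = (⊤ : Subalgebra 𝕜 H))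
    -- (K, r) braided central with K ⊆ H₀
    (ι : K →ₐc[𝕜] H) (hι : Function.Injective ι)
    (hK0 : ∀ y : K, ι y ∈ 𝒜 0)
    (r : H →ₗ[𝕜] K →ₗ[𝕜] 𝕜)
    -- (2.1): r(hh', k) = r(h', k₁) r(h, k₂)
    (h21 : ∀ (h h' : H) (x : K), r (h * h') x
      = LinearMap.mul' 𝕜 𝕜 (TensorProduct.map (r h') (r h) (Coalgebra.comul (R := 𝕜) x)))
    -- (2.2): r(h, kk') = r(h₁, k) r(h₂, k')
    (h22 : ∀ (h : H) (x y : K), r h (x * y)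
      = LinearMap.mul' 𝕜 𝕜 (TensorProduct.map (r.flip x) (r.flip y) (Coalgebra.comul (R := 𝕜) h)))
    -- (2.3): r(h,1) = ε(h), r(1,k) = ε(k)
    (h23b : ∀ x : K, r 1 x = Coalgebra.counit (R := 𝕜) x)
    -- (2.4): r(h₁, k₁) k₂ h₂ = h₁ k₁ r(h₂, k₂)
    (h24 : ∀ (h : H) (x : K),
      (TensorProduct.lid 𝕜 H) (TensorProduct.map (TensorProduct.lift r)
          ((LinearMap.mul' 𝕜 H) ∘ₗ (TensorProduct.map ι.toLinearMap LinearMap.id)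
            ∘ₗ (TensorProduct.comm 𝕜 H K).toLinearMap)
          ((TensorProduct.tensorTensorTensorComm 𝕜 H H K K)
            (Coalgebra.comul (R := 𝕜) h ⊗ₜ[𝕜] Coalgebra.comul (R := 𝕜) x)))
        = (TensorProduct.rid 𝕜 H) (TensorProduct.map
            ((LinearMap.mul' 𝕜 H) ∘ₗ (TensorProduct.map LinearMap.id ι.toLinearMap))
            (TensorProduct.lift r)
            ((TensorProduct.tensorTensorTensorComm 𝕜 H H K K)
              (Coalgebra.comul (R := 𝕜) h ⊗ₜ[𝕜] Coalgebra.comul (R := 𝕜) x))))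
    -- (2.5): r(k, k') = ε(k)ε(k')
    (h25 : ∀ x y : K, r (ι x) y = Coalgebra.counit (R := 𝕜) x * Coalgebra.counit (R := 𝕜) y)
    : ∃ G : Subgroup Γ, G ≤ Subgroup.center Γ ∧
      ∃ Φ : G →* (Γ →* 𝕜ˣ),
        -- K = kG
        (LinearMap.range ι.toLinearMap = Submodule.span 𝕜 (gl '' (G : Set Γ)))
        -- r(γ, g) = ⟨γ, Φ(g)⟩ on grouplikes
        ∧ (∀ (γ : Γ) (g : G) (y : K), ι y = gl (g : Γ) → r (gl γ) y = ((Φ g γ : 𝕜ˣ) : 𝕜))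
        -- ⟨g', Φ(g)⟩ = 1
        ∧ (∀ g g' : G, Φ g (g' : Γ) = 1)
        -- g x_i g⁻¹ = ⟨g_i, Φ(g)⟩ x_i
        ∧ (∀ (g : G) (i : Fin θ),
            gl (g : Γ) * x i = ((Φ g (gvec i) : 𝕜ˣ) : 𝕜) • (x i * gl (g : Γ)))
        -- r vanishes on H_n ⊗ K for n ≥ 1
        ∧ (∀ n : ℕ, 1 ≤ n → ∀ h ∈ 𝒜 n, ∀ y : K, r h y = 0) := by
  have hgl : ∀ γ, IsGroupLikeElem 𝕜 (gl γ) := fun γ => ⟨hgl_counit γ, hgl_comul γ⟩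
  have hgl0 : ∀ γ, gl γ ∈ 𝒜 0 := fun γ => hgl_span ▸ Submodule.subset_span ⟨γ, rfl⟩
  have : SetLike.GradedMonoid 𝒜 := { one_mem := h1mem, mul_mem := fun _ _ _ _ => hmul }
  let := hinternal.gradedAlgebra
  have hskew : ∀ (y : K) (g : Γ), ι y = gl g → ∀ i,
      r (x i) y = 0 ∧ gl g * x i = r (gl (gvec i)) y • (x i * gl g) := by
    intro y g hyg i
    have hne : ι y * gl (gvec i) ≠ ι y := by
      rw [hyg, ← map_mul]
      exact fun h => hgvec_ne i (mul_eq_left.mp (hgl_li.injective h))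
    rw [← hyg]
    exact PairingCommutes.eq_zero_and_mul_eq_of_skewPrimitive h24 h23b 𝒜 (hx_comul i) (hx_mem i)
      (hgl0 _) (.of_map_of_injective ι hι (hyg ▸ hgl g)) (hyg ▸ hgl0 g) hne
  have hvanish : ∀ (y : K) (g : Γ), ι y = gl g → ∀ n, 1 ≤ n → ∀ h ∈ 𝒜 n, r h y = 0 := by
    intro y g hyg n hn h hh
    refine (PairingMulLeft.character h21 h23b (.of_map_of_injective ι hι (hyg ▸ hgl g))
      ).eq_zero_of_mem_of_ne_zero 𝒜 hgen ?_ (by omega) hh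
    rintro _ (⟨γ, rfl⟩ | ⟨i, rfl⟩)
    · exact ⟨0, hgl0 γ, fun h => absurd rfl h⟩
    · exact ⟨1, hx_mem i, fun _ => (hskew y g hyg i).1⟩
  have hrange := CoalgHom.range_eq_span_image_of_le_span ι.toCoalgHom hgl_li hgl_comul
    (hgl_span ▸ fun _ ⟨y, hy⟩ => hy ▸ hK0 y)
  refine ⟨grouplikeSubgroup gl hgl ι hι,
    grouplikeSubgroup_le_center h24 h21 h23b hgl_li.injective,
    (PairingMulLeft.characterHom h21 h22 h23b gl hgl_comul).comp grouplikeSubgroup.toGroupLike,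
    hrange, ?_, ?_, ?_, ?_⟩
  · intro γ g y hy
    rw [hι (hy.trans (grouplikeSubgroup.map_toGroupLike g).symm)]
    rfl
  · intro g g'
    ext
    change r (gl g') (grouplikeSubgroup.toGroupLike g : K) = 1
    rw [← grouplikeSubgroup.map_toGroupLike g', h25]
    simp
  · intro g i
    exact (hskew _ g (grouplikeSubgroup.map_toGroupLike g) i).2
  · intro n hn h hh y
    have hr : r h = 0 := LinearMap.ext_on
      (Submodule.span_preimage_eq_top_of_range_eq_span hι hrange)
      fun y ⟨γ, _, hy⟩ => hvanish y γ hy.symm n hn h hh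
    exact LinearMap.congr_fun hr y

/-- Proposition 3.3, one direction: a braided central Hopf subalgebra
(K, r) of a coradically graded pointed Hopf algebra H with K ⊆ H₀ = kΓ comes from a pair
(G, Φ) with G ⊆ Z(Γ) central and Φ : G → Γ̂ satisfying the stated conditions, and r
vanishes on H_n ⊗ K for n ≥ 1. -/
theorem braided_central_of_pointed_gives_pair
    {𝕜 H K : Type*} [Field 𝕜] [IsAlgClosed 𝕜] [CharZero 𝕜]
    [Ring H] [HopfAlgebra 𝕜 H] [FiniteDimensional 𝕜 H]
    [Ring K] [HopfAlgebra 𝕜 K]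
    {Γ : Type*} [Group Γ] [Fintype Γ]
    -- the grading of H
    (𝒜 : ℕ → Submodule 𝕜 H)
    (hinternal : DirectSum.IsInternal 𝒜)
    (hmul : ∀ {m n : ℕ} {a b : H}, a ∈ 𝒜 m → b ∈ 𝒜 n → a * b ∈ 𝒜 (m + n))
    (h1mem : (1 : H) ∈ 𝒜 0)
    (hcomul_graded : ∀ (n : ℕ), ∀ h ∈ 𝒜 n, Coalgebra.comul (R := 𝕜) h ∈
      ⨆ p : {p : ℕ × ℕ // p.1 + p.2 = n},
        LinearMap.range (TensorProduct.map (𝒜 p.1.1).subtype (𝒜 p.1.2).subtype))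
    -- H₀ = kΓ
    (gl : Γ →* H)
    (hgl_comul : ∀ γ : Γ, Coalgebra.comul (R := 𝕜) (gl γ) = gl γ ⊗ₜ[𝕜] gl γ)
    (hgl_counit : ∀ γ : Γ, Coalgebra.counit (R := 𝕜) (gl γ) = 1)
    (hgl_li : LinearIndependent 𝕜 (fun γ : Γ => gl γ))
    (hgl_span : Submodule.span 𝕜 (Set.range gl) = 𝒜 0)
    -- the skew primitive generators x₁, ..., x_θ in degree one
    {θ : ℕ} (x : Fin θ → H) (gvec : Fin θ → Γ)
    (hx_mem : ∀ i, x i ∈ 𝒜 1)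
    (hx_comul : ∀ i, Coalgebra.comul (R := 𝕜) (x i)
      = x i ⊗ₜ[𝕜] gl (gvec i) + (1 : H) ⊗ₜ[𝕜] x i)
    (hgvec_ne : ∀ i, gvec i ≠ 1)
    (hgen : Algebra.adjoin 𝕜 (Set.range gl ∪ Set.range x) = (⊤ : Subalgebra 𝕜 H))
    -- (K, r) braided central with K ⊆ H₀
    (ι : K →ₐc[𝕜] H) (hι : Function.Injective ι)
    (hK0 : ∀ y : K, ι y ∈ 𝒜 0)
    (r : H →ₗ[𝕜] K →ₗ[𝕜] 𝕜)
    -- (2.1): r(hh', k) = r(h', k₁) r(h, k₂)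
    (h21 : ∀ (h h' : H) (x : K), r (h * h') x
      = LinearMap.mul' 𝕜 𝕜 (TensorProduct.map (r h') (r h) (Coalgebra.comul (R := 𝕜) x)))
    -- (2.2): r(h, kk') = r(h₁, k) r(h₂, k')
    (h22 : ∀ (h : H) (x y : K), r h (x * y)
      = LinearMap.mul' 𝕜 𝕜 (TensorProduct.map (r.flip x) (r.flip y) (Coalgebra.comul (R := 𝕜) h)))
    -- (2.3): r(h,1) = ε(h), r(1,k) = ε(k)
    (h23a : ∀ h : H, r h 1 = Coalgebra.counit (R := 𝕜) h)
    (h23b : ∀ x : K, r 1 x = Coalgebra.counit (R := 𝕜) x)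
    -- (2.4): r(h₁, k₁) k₂ h₂ = h₁ k₁ r(h₂, k₂)
    (h24 : ∀ (h : H) (x : K),
      (TensorProduct.lid 𝕜 H) (TensorProduct.map (TensorProduct.lift r)
          ((LinearMap.mul' 𝕜 H) ∘ₗ (TensorProduct.map ι.toLinearMap LinearMap.id)
            ∘ₗ (TensorProduct.comm 𝕜 H K).toLinearMap)
          ((TensorProduct.tensorTensorTensorComm 𝕜 H H K K)
            (Coalgebra.comul (R := 𝕜) h ⊗ₜ[𝕜] Coalgebra.comul (R := 𝕜) x)))
        = (TensorProduct.rid 𝕜 H) (TensorProduct.map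
            ((LinearMap.mul' 𝕜 H) ∘ₗ (TensorProduct.map LinearMap.id ι.toLinearMap))
            (TensorProduct.lift r)
            ((TensorProduct.tensorTensorTensorComm 𝕜 H H K K)
              (Coalgebra.comul (R := 𝕜) h ⊗ₜ[𝕜] Coalgebra.comul (R := 𝕜) x))))
    -- (2.5): r(k, k') = ε(k)ε(k')
    (h25 : ∀ x y : K, r (ι x) y = Coalgebra.counit (R := 𝕜) x * Coalgebra.counit (R := 𝕜) y)
    : ∃ G : Subgroup Γ, G ≤ Subgroup.center Γ ∧
      ∃ Φ : G →* (Γ →* 𝕜ˣ),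
        -- K = kG
        (LinearMap.range ι.toLinearMap = Submodule.span 𝕜 (gl '' (G : Set Γ)))
        -- r(γ, g) = ⟨γ, Φ(g)⟩ on grouplikes
        ∧ (∀ (γ : Γ) (g : G) (y : K), ι y = gl (g : Γ) → r (gl γ) y = ((Φ g γ : 𝕜ˣ) : 𝕜))
        -- ⟨g', Φ(g)⟩ = 1
        ∧ (∀ g g' : G, Φ g (g' : Γ) = 1)
        -- g x_i g⁻¹ = ⟨g_i, Φ(g)⟩ x_i
        ∧ (∀ (g : G) (i : Fin θ),
            gl (g : Γ) * x i = ((Φ g (gvec i) : 𝕜ˣ) : 𝕜) • (x i * gl (g : Γ)))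
        -- r vanishes on H_n ⊗ K for n ≥ 1
        ∧ (∀ n : ℕ, 1 ≤ n → ∀ h ∈ 𝒜 n, ∀ y : K, r h y = 0) :=
  braided_central_of_pointed_gives_pair_general 𝒜 hinternal hmul h1mem gl hgl_comul hgl_counit
    hgl_li hgl_span x gvec hx_mem hx_comul hgvec_ne hgen ι hι hK0 r h21 h22 h23b h24 h25
end

section
/- Conversely: let H, Γ, x_1, …, x_θ be as above, G ⊆ Z(Γ) a central subgroup, and Φ : G → Hom(Γ, k*) a group homomorphism such that ⟨g', Φ(g)⟩ = 1 and g x_i g⁻¹ = ⟨g_i, Φ(g)⟩ x_i for all g, g' ∈ G and 1 ≤ i ≤ θ. Then defining r : H ⊗ kG → k by r(γ, g) = ⟨γ, Φ(g)⟩ on H_0 ⊗ kG (extended linearly) and r = 0 on H_n ⊗ kG for n ≥ 1, the pair (kG, r) is a braided central Hopf subalgebra of H. -/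
open TensorProduct

set_option maxHeartbeats 1000000 in
set_option synthInstance.maxHeartbeats 200000 in
/-- Proposition 3.3, converse direction: given a central subgroup
G ⊆ Z(Γ) and Φ : G → Γ̂ with ⟨g', Φ(g)⟩ = 1 and g x_i g⁻¹ = ⟨g_i, Φ(g)⟩ x_i, the pairing
r given by ⟨·, Φ(·)⟩ on H₀ ⊗ kG and zero on H_n ⊗ kG (n ≥ 1) makes (kG, r) a braided
central Hopf subalgebra of H. -/
theorem pair_gives_braided_central_of_pointed
    {𝕜 H K : Type*} [Field 𝕜] [IsAlgClosed 𝕜] [CharZero 𝕜]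
    [Ring H] [HopfAlgebra 𝕜 H] [FiniteDimensional 𝕜 H]
    [Ring K] [HopfAlgebra 𝕜 K]
    {Γ : Type*} [Group Γ] [Fintype Γ]
    -- the grading of H
    (𝒜 : ℕ → Submodule 𝕜 H)
    (hinternal : DirectSum.IsInternal 𝒜)
    (hmul : ∀ {m n : ℕ} {a b : H}, a ∈ 𝒜 m → b ∈ 𝒜 n → a * b ∈ 𝒜 (m + n))
    (h1mem : (1 : H) ∈ 𝒜 0)
    (hcomul_graded : ∀ (n : ℕ), ∀ h ∈ 𝒜 n, Coalgebra.comul (R := 𝕜) h ∈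
      ⨆ p : {p : ℕ × ℕ // p.1 + p.2 = n},
        LinearMap.range (TensorProduct.map (𝒜 p.1.1).subtype (𝒜 p.1.2).subtype))
    -- H₀ = kΓ
    (gl : Γ →* H)
    (hgl_comul : ∀ γ : Γ, Coalgebra.comul (R := 𝕜) (gl γ) = gl γ ⊗ₜ[𝕜] gl γ)
    (hgl_counit : ∀ γ : Γ, Coalgebra.counit (R := 𝕜) (gl γ) = 1)
    (hgl_li : LinearIndependent 𝕜 (fun γ : Γ => gl γ))
    (hgl_span : Submodule.span 𝕜 (Set.range gl) = 𝒜 0)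
    -- the skew primitive generators x₁, ..., x_θ in degree one
    {θ : ℕ} (x : Fin θ → H) (gvec : Fin θ → Γ)
    (hx_mem : ∀ i, x i ∈ 𝒜 1)
    (hx_comul : ∀ i, Coalgebra.comul (R := 𝕜) (x i)
      = x i ⊗ₜ[𝕜] gl (gvec i) + (1 : H) ⊗ₜ[𝕜] x i)
    (hgvec_ne : ∀ i, gvec i ≠ 1)
    (hgen : Algebra.adjoin 𝕜 (Set.range gl ∪ Set.range x) = (⊤ : Subalgebra 𝕜 H))
    -- the central subgroup G and the homomorphism Φ
    (G : Subgroup Γ) (hGcentral : G ≤ Subgroup.center Γ)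
    (Φ : G →* (Γ →* 𝕜ˣ))
    (hΦtriv : ∀ g g' : G, Φ g (g' : Γ) = 1)
    (hΦconj : ∀ (g : G) (i : Fin θ),
      gl (g : Γ) * x i = ((Φ g (gvec i) : 𝕜ˣ) : 𝕜) • (x i * gl (g : Γ)))
    -- K = kG included in H
    (glG : G →* K)
    (hglG_comul : ∀ g : G, Coalgebra.comul (R := 𝕜) (glG g) = glG g ⊗ₜ[𝕜] glG g)
    (hglG_counit : ∀ g : G, Coalgebra.counit (R := 𝕜) (glG g) = 1)
    (hglG_li : LinearIndependent 𝕜 (fun g : G => glG g))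
    (hglG_span : Submodule.span 𝕜 (Set.range glG) = ⊤)
    (ι : K →ₐc[𝕜] H) (hι : Function.Injective ι)
    (hιgl : ∀ g : G, ι (glG g) = gl (g : Γ))
    -- the pairing r : ⟨·, Φ(·)⟩ on H₀ ⊗ K, zero in higher degrees
    (r : H →ₗ[𝕜] K →ₗ[𝕜] 𝕜)
    (hr0 : ∀ (γ : Γ) (g : G), r (gl γ) (glG g) = ((Φ g γ : 𝕜ˣ) : 𝕜))
    (hrhigh : ∀ n : ℕ, 1 ≤ n → ∀ h ∈ 𝒜 n, ∀ y : K, r h y = 0) :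
    -- (kG, r) is a braided central Hopf subalgebra of H
    (∀ (h h' : H) (y : K), r (h * h') y
      = LinearMap.mul' 𝕜 𝕜 (TensorProduct.map (r h') (r h) (Coalgebra.comul (R := 𝕜) y)))
    ∧ (∀ (h : H) (y y' : K), r h (y * y')
      = LinearMap.mul' 𝕜 𝕜 (TensorProduct.map (r.flip y) (r.flip y') (Coalgebra.comul (R := 𝕜) h)))
    ∧ (∀ h : H, r h 1 = Coalgebra.counit (R := 𝕜) h)
    ∧ (∀ y : K, r 1 y = Coalgebra.counit (R := 𝕜) y)
    ∧ (∀ (h : H) (y : K),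
      (TensorProduct.lid 𝕜 H) (TensorProduct.map (TensorProduct.lift r)
          ((LinearMap.mul' 𝕜 H) ∘ₗ (TensorProduct.map ι.toLinearMap LinearMap.id)
            ∘ₗ (TensorProduct.comm 𝕜 H K).toLinearMap)
          ((TensorProduct.tensorTensorTensorComm 𝕜 H H K K)
            (Coalgebra.comul (R := 𝕜) h ⊗ₜ[𝕜] Coalgebra.comul (R := 𝕜) y)))
        = (TensorProduct.rid 𝕜 H) (TensorProduct.map
            ((LinearMap.mul' 𝕜 H) ∘ₗ (TensorProduct.map LinearMap.id ι.toLinearMap))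
            (TensorProduct.lift r)
            ((TensorProduct.tensorTensorTensorComm 𝕜 H H K K)
              (Coalgebra.comul (R := 𝕜) h ⊗ₜ[𝕜] Coalgebra.comul (R := 𝕜) y))))
    ∧ (∀ y y' : K, r (ι y) y'
        = Coalgebra.counit (R := 𝕜) y * Coalgebra.counit (R := 𝕜) y') := by
  classical
  -- membership helpers
  have hmem_top : ∀ h : H, h ∈ ⨆ n, 𝒜 n := by
    intro h
    rw [hinternal.submodule_iSup_eq_top]; trivial
  have hy_span : ∀ y : K, y ∈ Submodule.span 𝕜 (Set.range glG) := by
    intro y; rw [hglG_span]; trivial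
  -- multiplicativity of r(·)(glG g)
  have lamA : ∀ (g : G) (a b : H), r (a * b) (glG g) = r a (glG g) * r b (glG g) := by
    intro g a b
    induction hmem_top a using Submodule.iSup_induction' with
    | zero => simp
    | add a₁ a₂ h₁ h₂ ih₁ ih₂ => simp only [add_mul, map_add, LinearMap.add_apply, ih₁, ih₂]
    | mem m a ha =>
      induction hmem_top b using Submodule.iSup_induction' with
      | zero => simp
      | add b₁ b₂ h₁ h₂ ih₁ ih₂ =>
          simp only [mul_add, map_add, LinearMap.add_apply, ih₁, ih₂]
      | mem n b hb =>
        rcases Nat.eq_zero_or_pos m with hm | hm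
        · rcases Nat.eq_zero_or_pos n with hn | hn
          · subst hm; subst hn
            rw [← hgl_span] at ha hb
            induction ha, hb using Submodule.span_induction₂ with
            | mem_mem a b ha hb =>
                obtain ⟨γ, rfl⟩ := ha; obtain ⟨γ', rfl⟩ := hb
                rw [← map_mul, hr0, hr0, hr0, map_mul, Units.val_mul]
            | zero_left b hb => simp
            | zero_right a ha => simp
            | add_left a₁ a₂ b h₁ h₂ h₃ ih₁ ih₂ =>
                simp only [add_mul, map_add, LinearMap.add_apply, ih₁, ih₂]
            | add_right a b₁ b₂ h₁ h₂ h₃ ih₁ ih₂ =>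
                simp only [mul_add, map_add, LinearMap.add_apply, ih₁, ih₂]
            | smul_left c a b ha hb ih =>
                simp only [smul_mul_assoc, map_smul, LinearMap.smul_apply, ih, smul_eq_mul]; ring
            | smul_right c a b ha hb ih =>
                simp only [mul_smul_comm, map_smul, LinearMap.smul_apply, ih, smul_eq_mul]; ring
          · rw [hrhigh n hn b hb, hrhigh (m + n) (by omega) _ (hmul ha hb), mul_zero]
        · rw [hrhigh m hm a ha, hrhigh (m + n) (by omega) _ (hmul ha hb), zero_mul]
  -- value of r(1)(glG g)
  have lam_one : ∀ g : G, r (1 : H) (glG g) = 1 := by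
    intro g
    rw [← map_one gl, hr0, map_one (Φ g), Units.val_one]
  -- the algebra homomorphisms λ_g
  set lam : G → (H →ₐ[𝕜] 𝕜) := fun g =>
    AlgHom.ofLinearMap (r.flip (glG g)) (lam_one g) (fun a b => lamA g a b) with hlam
  have lam_apply : ∀ (g : G) (a : H), lam g a = r a (glG g) := fun g a => rfl
  -- counit of x i is zero
  have hcount_x : ∀ i, Coalgebra.counit (R := 𝕜) (x i) = 0 := by
    intro i
    have h1 := Coalgebra.rTensor_counit_comul (R := 𝕜) (x i)
    rw [hx_comul i, map_add, LinearMap.rTensor_tmul, LinearMap.rTensor_tmul,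
      Bialgebra.counit_one] at h1
    have h2 : (Coalgebra.counit (R := 𝕜) (x i)) ⊗ₜ[𝕜] gl (gvec i) = (0 : 𝕜 ⊗[𝕜] H) := by
      have := congrArg (fun z => z - (1 : 𝕜) ⊗ₜ[𝕜] x i) h1
      simpa using this
    have h3 := congrArg (TensorProduct.lid 𝕜 H) h2
    simp only [lid_tmul, map_zero, smul_eq_zero] at h3
    rcases h3 with h | h
    · exact h
    · exact absurd h (hgl_li.ne_zero (gvec i))
  -- lam 1 is the counit
  have lam_counit : lam 1 = Bialgebra.counitAlgHom 𝕜 H := by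
    apply AlgHom.ext_of_adjoin_eq_top hgen
    rintro z (⟨γ, rfl⟩ | ⟨i, rfl⟩)
    · show r (gl γ) (glG 1) = Coalgebra.counit (R := 𝕜) (gl γ)
      rw [hr0, hgl_counit, map_one Φ, MonoidHom.one_apply, Units.val_one]
    · show r (x i) (glG 1) = Coalgebra.counit (R := 𝕜) (x i)
      rw [hrhigh 1 le_rfl _ (hx_mem i), hcount_x i]
  refine ⟨?_, ?_, ?_, ?_, ?_, ?_⟩
  · -- statement 1
    intro h h' y
    induction hy_span y using Submodule.span_induction with
    | mem z hz =>
        obtain ⟨g, rfl⟩ := hz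
        rw [hglG_comul, TensorProduct.map_tmul, LinearMap.mul'_apply, lamA g h h', mul_comm]
    | zero => simp
    | add y₁ y₂ h₁ h₂ ih₁ ih₂ => simp only [map_add, LinearMap.add_apply, ih₁, ih₂]
    | smul c y hy ih => simp only [map_smul, LinearMap.smul_apply, ih, smul_eq_mul]
  · -- statement 2
    intro h y y'
    induction hmem_top h using Submodule.iSup_induction' with
    | zero => simp
    | add h₁ h₂ hm₁ hm₂ ih₁ ih₂ => simp only [map_add, LinearMap.add_apply, ih₁, ih₂]
    | mem n h hn =>
      rcases Nat.eq_zero_or_pos n with hzero | hpos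
      · subst hzero
        rw [← hgl_span] at hn
        induction hn using Submodule.span_induction with
        | mem z hz =>
            obtain ⟨γ, rfl⟩ := hz
            rw [hgl_comul, TensorProduct.map_tmul, LinearMap.mul'_apply]
            simp only [LinearMap.flip_apply]
            induction hy_span y, hy_span y' using Submodule.span_induction₂ with
            | mem_mem a b ha hb =>
                obtain ⟨g, rfl⟩ := ha; obtain ⟨g', rfl⟩ := hb
                rw [← map_mul, hr0, hr0, hr0, map_mul, MonoidHom.mul_apply, Units.val_mul]
            | zero_left b hb => simp
            | zero_right a ha => simp
            | add_left a₁ a₂ b h₁ h₂ h₃ ih₁ ih₂ =>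
                simp only [add_mul, map_add, ih₁, ih₂]
            | add_right a b₁ b₂ h₁ h₂ h₃ ih₁ ih₂ =>
                simp only [mul_add, map_add, ih₁, ih₂]
            | smul_left c a b ha hb ih =>
                simp only [smul_mul_assoc, map_smul, ih, smul_eq_mul]; ring
            | smul_right c a b ha hb ih =>
                simp only [mul_smul_comm, map_smul, ih, smul_eq_mul]; ring
        | zero => simp
        | add a₁ a₂ h₁ h₂ ih₁ ih₂ => simp only [map_add, LinearMap.add_apply, ih₁, ih₂]
        | smul c a ha ih => simp only [map_smul, LinearMap.smul_apply, ih, smul_eq_mul]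
      · rw [hrhigh n hpos h hn]
        have hker : (⨆ p : {p : ℕ × ℕ // p.1 + p.2 = n},
            LinearMap.range (TensorProduct.map (𝒜 p.1.1).subtype (𝒜 p.1.2).subtype)) ≤
            LinearMap.ker (LinearMap.mul' 𝕜 𝕜 ∘ₗ TensorProduct.map (r.flip y) (r.flip y')) := by
          refine iSup_le ?_
          rintro ⟨⟨p₁, p₂⟩, hp⟩ t ⟨s, rfl⟩
          rw [LinearMap.mem_ker]
          induction s using TensorProduct.induction_on with
          | zero => simp
          | tmul a b =>
              simp only [TensorProduct.map_tmul, Submodule.coe_subtype, LinearMap.coe_comp,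
                Function.comp_apply, LinearMap.mul'_apply, LinearMap.flip_apply]
              rcases Nat.eq_zero_or_pos p₁ with h1 | h1
              · have h2 : 1 ≤ p₂ := by omega
                rw [hrhigh p₂ h2 _ b.2, mul_zero]
              · rw [hrhigh p₁ h1 _ a.2, zero_mul]
          | add s t ihs iht => simp only [map_add, ihs, iht, add_zero]
        have := hker (hcomul_graded n h hn)
        rw [LinearMap.mem_ker, LinearMap.comp_apply] at this
        rw [this]
  · -- statement 3
    intro h
    have := congrArg (fun f : H →ₐ[𝕜] 𝕜 => f h) lam_counit
    rw [show (1 : K) = glG 1 from (map_one glG).symm, ← lam_apply 1 h]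
    exact this
  · -- statement 4
    intro y
    induction hy_span y using Submodule.span_induction with
    | mem z hz =>
        obtain ⟨g, rfl⟩ := hz
        rw [hglG_counit, ← map_one gl, hr0, map_one (Φ g), Units.val_one]
    | zero => simp
    | add y₁ y₂ h₁ h₂ ih₁ ih₂ => simp only [map_add, ih₁, ih₂]
    | smul c y hy ih => simp only [map_smul, ih, smul_eq_mul]
  · -- statement 5
    intro h y
    induction hy_span y using Submodule.span_induction with
    | zero => simp only [map_zero, tmul_zero]
    | add y₁ y₂ h₁ h₂ ih₁ ih₂ => simp only [map_add, tmul_add, ih₁, ih₂]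
    | smul c z hz ih => simp only [map_smul, tmul_smul, ih]
    | mem z hz =>
      obtain ⟨g, rfl⟩ := hz
      rw [hglG_comul]
      have huv : gl (g : Γ) * gl ((g⁻¹ : G) : Γ) = 1 := by
        rw [← map_mul, ← Subgroup.coe_mul, mul_inv_cancel, Subgroup.coe_one, map_one]
      have hvu : gl ((g⁻¹ : G) : Γ) * gl (g : Γ) = 1 := by
        rw [← map_mul, ← Subgroup.coe_mul, inv_mul_cancel, Subgroup.coe_one, map_one]
      set lamg : H →ₐ[𝕜] H := (Algebra.ofId 𝕜 H).comp (lam g) with hlamg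
      have hlamg_apply : ∀ a : H, lamg a = algebraMap 𝕜 H (r a (glG g)) := fun a => rfl
      have c1 : ∀ a b : H, Commute (lamg a) ((AlgHom.id 𝕜 H) b) := fun a b => by
        rw [hlamg_apply]; exact Algebra.commute_algebraMap_left _ _
      have c2 : ∀ a b : H, Commute ((AlgHom.id 𝕜 H) a) (lamg b) := fun a b => by
        rw [hlamg_apply]; exact Algebra.commute_algebraMap_right _ _
      set Ψ : H ⊗[𝕜] H →ₐ[𝕜] H :=
        Algebra.TensorProduct.lift lamg (AlgHom.id 𝕜 H) c1 with hΨdef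
      set Ψ' : H ⊗[𝕜] H →ₐ[𝕜] H :=
        Algebra.TensorProduct.lift (AlgHom.id 𝕜 H) lamg c2 with hΨ'def
      set ψ : H →ₐ[𝕜] H := Ψ.comp (Bialgebra.comulAlgHom 𝕜 H) with hψdef
      set ψ' : H →ₐ[𝕜] H := Ψ'.comp (Bialgebra.comulAlgHom 𝕜 H) with hψ'def
      -- conjugation by gl g as an algebra homomorphism
      have hconj_one : gl (g : Γ) * ((1 : H) * gl ((g⁻¹ : G) : Γ)) = 1 := by
        rw [one_mul, huv]
      have hconj_mul : ∀ a b : H,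
          gl (g : Γ) * ((a * b) * gl ((g⁻¹ : G) : Γ))
            = (gl (g : Γ) * (a * gl ((g⁻¹ : G) : Γ)))
              * (gl (g : Γ) * (b * gl ((g⁻¹ : G) : Γ))) := by
        intro a b
        have hmid : gl ((g⁻¹ : G) : Γ) * (gl (g : Γ) * (b * gl ((g⁻¹ : G) : Γ)))
            = b * gl ((g⁻¹ : G) : Γ) := by rw [← mul_assoc, hvu, one_mul]
        calc gl (g : Γ) * ((a * b) * gl ((g⁻¹ : G) : Γ))
            = gl (g : Γ) * (a * (b * gl ((g⁻¹ : G) : Γ))) := by rw [mul_assoc]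
          _ = gl (g : Γ) * (a * (gl ((g⁻¹ : G) : Γ)
                * (gl (g : Γ) * (b * gl ((g⁻¹ : G) : Γ))))) := by rw [hmid]
          _ = (gl (g : Γ) * (a * gl ((g⁻¹ : G) : Γ)))
                * (gl (g : Γ) * (b * gl ((g⁻¹ : G) : Γ))) := by simp only [mul_assoc]
      set conj : H →ₐ[𝕜] H := AlgHom.ofLinearMap
        (LinearMap.mulLeft 𝕜 (gl (g : Γ)) ∘ₗ LinearMap.mulRight 𝕜 (gl ((g⁻¹ : G) : Γ)))
        hconj_one hconj_mul with hconjdef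
      have hconj_apply : ∀ a : H, conj a = gl (g : Γ) * (a * gl ((g⁻¹ : G) : Γ)) := fun a => rfl
      -- commutation of gl g with group-likes
      have hugl : ∀ γ : Γ, gl (g : Γ) * gl γ = gl γ * gl (g : Γ) := by
        intro γ
        rw [← map_mul, ← map_mul, ← Subgroup.mem_center_iff.mp (hGcentral g.2) γ]
      -- values on generators
      have hψgl : ∀ γ : Γ, ψ (gl γ) = ((Φ g γ : 𝕜ˣ) : 𝕜) • gl γ := by
        intro γ
        show Ψ (Coalgebra.comul (R := 𝕜) (gl γ)) = _
        rw [hgl_comul, hΨdef, Algebra.TensorProduct.lift_tmul, hlamg_apply, hr0,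
          AlgHom.coe_id, id_eq, ← Algebra.smul_def]
      have hψx : ∀ i, ψ (x i) = x i := by
        intro i
        show Ψ (Coalgebra.comul (R := 𝕜) (x i)) = _
        rw [hx_comul i, map_add, hΨdef, Algebra.TensorProduct.lift_tmul,
          Algebra.TensorProduct.lift_tmul, hlamg_apply, hlamg_apply,
          hrhigh 1 le_rfl _ (hx_mem i), lam_one g, map_zero, map_one, zero_mul, one_mul,
          AlgHom.coe_id, id_eq, zero_add]
      have hψ'gl : ∀ γ : Γ, ψ' (gl γ) = ((Φ g γ : 𝕜ˣ) : 𝕜) • gl γ := by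
        intro γ
        show Ψ' (Coalgebra.comul (R := 𝕜) (gl γ)) = _
        rw [hgl_comul, hΨ'def, Algebra.TensorProduct.lift_tmul, hlamg_apply, hr0,
          AlgHom.coe_id, id_eq, ← Algebra.commutes, ← Algebra.smul_def]
      have hψ'x : ∀ i, ψ' (x i) = ((Φ g (gvec i) : 𝕜ˣ) : 𝕜) • x i := by
        intro i
        show Ψ' (Coalgebra.comul (R := 𝕜) (x i)) = _
        rw [hx_comul i, map_add, hΨ'def, Algebra.TensorProduct.lift_tmul,
          Algebra.TensorProduct.lift_tmul, hlamg_apply, hlamg_apply,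
          hrhigh 1 le_rfl _ (hx_mem i), hr0, map_zero, mul_zero,
          AlgHom.coe_id, id_eq, add_zero, ← Algebra.commutes, ← Algebra.smul_def]
      have hconjgl : ∀ γ : Γ, conj (gl γ) = gl γ := by
        intro γ
        rw [hconj_apply, ← mul_assoc, hugl γ, mul_assoc, huv, mul_one]
      have hconjx : ∀ i, conj (x i) = ((Φ g (gvec i) : 𝕜ˣ) : 𝕜) • x i := by
        intro i
        rw [hconj_apply, ← mul_assoc, hΦconj g i, smul_mul_assoc, mul_assoc, huv, mul_one]
      -- ψ' = conj ∘ ψ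
      have hkey : ψ' = conj.comp ψ := by
        apply AlgHom.ext_of_adjoin_eq_top hgen
        rintro w (⟨γ, rfl⟩ | ⟨i, rfl⟩)
        · show ψ' (gl γ) = conj (ψ (gl γ))
          rw [hψ'gl, hψgl, map_smul, hconjgl]
        · show ψ' (x i) = conj (ψ (x i))
          rw [hψ'x, hψx, hconjx]
      -- compute the two sides
      have hL : ∀ t : H ⊗[𝕜] H,
          (TensorProduct.lid 𝕜 H) (TensorProduct.map (TensorProduct.lift r)
            ((LinearMap.mul' 𝕜 H) ∘ₗ (TensorProduct.map ι.toLinearMap LinearMap.id)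
              ∘ₗ (TensorProduct.comm 𝕜 H K).toLinearMap)
            ((TensorProduct.tensorTensorTensorComm 𝕜 H H K K)
              (t ⊗ₜ[𝕜] (glG g ⊗ₜ[𝕜] glG g))))
          = gl (g : Γ) * Ψ t := by
        intro t
        induction t using TensorProduct.induction_on with
        | zero => simp
        | tmul a b =>
            simp only [tensorTensorTensorComm_tmul, TensorProduct.map_tmul,
              LinearMap.coe_comp, Function.comp_apply, LinearEquiv.coe_coe, comm_tmul,
              TensorProduct.lift.tmul, LinearMap.mul'_apply, LinearMap.id_coe, id_eq,
              lid_tmul, hΨdef, Algebra.TensorProduct.lift_tmul, hlamg_apply,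
              AlgHom.coe_id, hιgl g, CoalgHom.coe_toLinearMap]
            rw [show ι.toLinearMap (glG g) = gl (g : Γ) from by rw [← hιgl g]; rfl,
              ← Algebra.smul_def, mul_smul_comm]
        | add s t ihs iht => simp only [add_tmul, map_add, mul_add, ihs, iht]
      have hR : ∀ t : H ⊗[𝕜] H,
          (TensorProduct.rid 𝕜 H) (TensorProduct.map
            ((LinearMap.mul' 𝕜 H) ∘ₗ (TensorProduct.map LinearMap.id ι.toLinearMap))
            (TensorProduct.lift r)
            ((TensorProduct.tensorTensorTensorComm 𝕜 H H K K)
              (t ⊗ₜ[𝕜] (glG g ⊗ₜ[𝕜] glG g))))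
          = Ψ' t * gl (g : Γ) := by
        intro t
        induction t using TensorProduct.induction_on with
        | zero => simp
        | tmul a b =>
            simp only [tensorTensorTensorComm_tmul, TensorProduct.map_tmul,
              LinearMap.coe_comp, Function.comp_apply, TensorProduct.lift.tmul,
              LinearMap.mul'_apply, LinearMap.id_coe, id_eq, rid_tmul,
              hΨ'def, Algebra.TensorProduct.lift_tmul, hlamg_apply,
              AlgHom.coe_id, hιgl g, CoalgHom.coe_toLinearMap]
            rw [show ι.toLinearMap (glG g) = gl (g : Γ) from by rw [← hιgl g]; rfl,
              ← Algebra.commutes, ← Algebra.smul_def, smul_mul_assoc]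
        | add s t ihs iht => simp only [add_tmul, map_add, add_mul, ihs, iht]
      rw [hL (Coalgebra.comul (R := 𝕜) h), hR (Coalgebra.comul (R := 𝕜) h)]
      have hkey' : Ψ' (Coalgebra.comul (R := 𝕜) h)
          = gl (g : Γ) * (Ψ (Coalgebra.comul (R := 𝕜) h) * gl ((g⁻¹ : G) : Γ)) :=
        congrArg (fun f : H →ₐ[𝕜] H => f h) hkey
      calc gl (g : Γ) * Ψ (Coalgebra.comul (R := 𝕜) h)
          = gl (g : Γ) * (Ψ (Coalgebra.comul (R := 𝕜) h)
              * (gl ((g⁻¹ : G) : Γ) * gl (g : Γ))) := by rw [hvu, mul_one]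
        _ = (gl (g : Γ) * (Ψ (Coalgebra.comul (R := 𝕜) h) * gl ((g⁻¹ : G) : Γ)))
              * gl (g : Γ) := by simp only [mul_assoc]
        _ = Ψ' (Coalgebra.comul (R := 𝕜) h) * gl (g : Γ) := by rw [← hkey']
  · -- statement 6
    intro y y'
    induction hy_span y, hy_span y' using Submodule.span_induction₂ with
    | mem_mem a b ha hb =>
        obtain ⟨g, rfl⟩ := ha; obtain ⟨g', rfl⟩ := hb
        rw [hιgl, hr0, hΦtriv, hglG_counit, hglG_counit, Units.val_one, one_mul]
    | zero_left b hb => simp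
    | zero_right a ha => simp
    | add_left a₁ a₂ b h₁ h₂ h₃ ih₁ ih₂ =>
        simp only [map_add, LinearMap.add_apply, ih₁, ih₂, add_mul]
    | add_right a b₁ b₂ h₁ h₂ h₃ ih₁ ih₂ =>
        simp only [map_add, ih₁, ih₂, mul_add]
    | smul_left c a b ha hb ih =>
        simp only [map_smul, LinearMap.smul_apply, ih, smul_eq_mul, mul_assoc]
    | smul_right c a b ha hb ih =>
        simp only [map_smul, ih, smul_eq_mul]; ring
end
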